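/- arXiv:2605.26614 — 7 statements merged into one kernel-verified Lean document; each statement's English description precedes it below -/
import Mathlib

section
/- For every t ≥ 2 and every graph G with adjacency matrix A and n vertices, hom(K_{t,t}, G) ≥ ‖A‖_{q→t}^{t²}, where q = t/(t-1), hom(K_{t,t}, G) = Σ_{J∈[n]^t} (Σ_i Π_b a_{i,j_b})^t counts homomorphisms from K_{t,t} to G, and ‖A‖_{q→t} is the operator norm of A from ℓ^q to ℓ^t. -/
open scoped Classical BigOperators

/-- Adjacency matrix of a simple graph on `Fin n`, with real entries. -/
noncomputable def adjMat {n : ℕ} (G : SimpleGraph (Fin n)) : Matrix (Fin n) (Fin n) ℝ :=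
  fun i j => if G.Adj i j then 1 else 0

/-- Spectral radius (largest real eigenvalue) of a real matrix. -/
noncomputable def specRad {α : Type*} [Fintype α] (A : Matrix α α ℝ) : ℝ :=
  sSup {μ : ℝ | ∃ x : α → ℝ, x ≠ 0 ∧ A.mulVec x = μ • x}

/-- The ℓ^p norm of a finitely supported real vector, for a real exponent `p`. -/
noncomputable def pNorm {α : Type*} [Fintype α] (p : ℝ) (x : α → ℝ) : ℝ :=
  (∑ i, |x i| ^ p) ^ (1 / p)

/-- The ℓ^p → ℓ^r operator norm of a real matrix. -/
noncomputable def opNorm {α β : Type*} [Fintype α] [Fintype β] (p r : ℝ)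
    (A : Matrix β α ℝ) : ℝ :=
  sSup {c : ℝ | ∃ x : α → ℝ, x ≠ 0 ∧ c = pNorm r (A.mulVec x) / pNorm p x}

/-!
Write `y = |x|`. Expanding the `t`-th powers,
`‖Ax‖_t^t ≤ ∑_i (∑_j a_{ij} y_j)^t = ∑_J (∏_b y_{j_b}) S_J`,
and Hölder's inequality over `J ∈ [n]^t` with exponents `q` and `t` bounds this by
`(∑_J ∏_b y_{j_b}^q)^{1/q} (∑_J S_J^t)^{1/t} = ‖x‖_q^t · hom(K_{t,t}, G)^{1/t}`.
Taking `t`-th roots, `‖A‖_{q→t} ≤ hom(K_{t,t}, G)^{1/t²}`.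
-/

open Finset Matrix

variable {α β : Type*} [Fintype α]

lemma pNorm_nonneg (p : ℝ) (x : α → ℝ) : 0 ≤ pNorm p x :=
  Real.rpow_nonneg (sum_nonneg fun _ _ => Real.rpow_nonneg (abs_nonneg _) _) _

lemma pNorm_pos {p : ℝ} {x : α → ℝ} (hx : x ≠ 0) : 0 < pNorm p x := by
  obtain ⟨j, hj⟩ := Function.ne_iff.1 hx
  have hsum : 0 < ∑ i, |x i| ^ p :=
    (Real.rpow_pos_of_pos (abs_pos.2 hj) p).trans_le
      (single_le_sum (fun _ _ => Real.rpow_nonneg (abs_nonneg _) p) (mem_univ j))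
  exact Real.rpow_pos_of_pos hsum _

lemma pNorm_natCast_pow {t : ℕ} (ht : t ≠ 0) (x : α → ℝ) :
    pNorm t x ^ t = ∑ i, |x i| ^ t := by
  rw [pNorm, one_div, Real.rpow_inv_natCast_pow
    (sum_nonneg fun _ _ => Real.rpow_nonneg (abs_nonneg _) _) ht]
  simp_rw [Real.rpow_natCast]

lemma abs_mulVec_le {R : Type*} [CommRing R] [LinearOrder R] [IsStrictOrderedRing R]
    {A : Matrix β α R} (hA : ∀ i j, 0 ≤ A i j) (x : α → R) (i : β) :
    |(A *ᵥ x) i| ≤ (A *ᵥ fun j => |x j|) i :=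
  calc |∑ j, A i j * x j| ≤ ∑ j, |A i j * x j| := abs_sum_le_sum_abs _ _
    _ = ∑ j, A i j * |x j| := by simp_rw [abs_mul, abs_of_nonneg (hA i _)]

variable [Fintype β]

lemma opNorm_nonneg (p r : ℝ) (A : Matrix β α ℝ) : 0 ≤ opNorm p r A :=
  Real.sSup_nonneg <| by
    rintro _ ⟨x, -, rfl⟩
    exact div_nonneg (pNorm_nonneg _ _) (pNorm_nonneg _ _)

lemma opNorm_le_bound {p r M : ℝ} {A : Matrix β α ℝ} (hM : 0 ≤ M)
    (h : ∀ x, x ≠ 0 → pNorm r (A *ᵥ x) ≤ M * pNorm p x) : opNorm p r A ≤ M :=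
  Real.sSup_le (by
    rintro _ ⟨x, hx, rfl⟩
    exact (div_le_iff₀ (pNorm_pos hx)).2 (h x hx)) hM

/-- For the adjacency matrix of a graph `G` this is `hom(K_{t,t}, G)`. -/
def homKtt {R : Type*} [CommSemiring R] (A : Matrix β α R) (t : ℕ) : R :=
  ∑ J : Fin t → α, (∑ i, ∏ b, A i (J b)) ^ t

lemma homKtt_nonneg {R : Type*} [CommSemiring R] [PartialOrder R] [IsOrderedRing R]
    {A : Matrix β α R} (hA : ∀ i j, 0 ≤ A i j) (t : ℕ) : 0 ≤ homKtt A t :=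
  sum_nonneg fun J _ => pow_nonneg (sum_nonneg fun i _ => prod_nonneg fun b _ => hA i (J b)) t

lemma sum_mulVec_pow {R : Type*} [CommSemiring R] (A : Matrix β α R) (y : α → R) (t : ℕ) :
    ∑ i, (A *ᵥ y) i ^ t = ∑ J : Fin t → α, (∏ b, y (J b)) * ∑ i, ∏ b, A i (J b) := by
  simp_rw [mul_sum, ← prod_mul_distrib]
  rw [sum_comm]
  refine sum_congr rfl fun i _ => ?_
  rw [mulVec, dotProduct, Fintype.sum_pow]
  simp_rw [mul_comm]

theorem pNorm_mulVec_pow_le {t : ℕ} (ht : 1 < (t : ℝ)) {A : Matrix β α ℝ}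
    (hA : ∀ i j, 0 ≤ A i j) (x : α → ℝ) :
    pNorm t (A *ᵥ x) ^ t ≤ pNorm (t / (t - 1)) x ^ t * homKtt A t ^ (1 / (t : ℝ)) := by
  have ht0 : t ≠ 0 := by rintro rfl; norm_num at ht
  set q : ℝ := t / (t - 1)
  have hqt : q.HolderConjugate t := (Real.HolderConjugate.conjExponent ht).symm
  set y : α → ℝ := fun j => |x j|
  have hy : ∀ J : Fin t → α, 0 ≤ ∏ b, y (J b) := fun J => prod_nonneg fun b _ => abs_nonneg _
  have hS : ∀ J : Fin t → α, 0 ≤ ∑ i, ∏ b, A i (J b) :=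
    fun J => sum_nonneg fun i _ => prod_nonneg fun b _ => hA i (J b)
  calc pNorm t (A *ᵥ x) ^ t = ∑ i, |(A *ᵥ x) i| ^ t := pNorm_natCast_pow ht0 _
    _ ≤ ∑ i, (A *ᵥ y) i ^ t :=
        sum_le_sum fun i _ => pow_le_pow_left₀ (abs_nonneg _) (abs_mulVec_le hA x i) t
    _ = ∑ J : Fin t → α, (∏ b, y (J b)) * ∑ i, ∏ b, A i (J b) := sum_mulVec_pow A y t
    _ ≤ (∑ J : Fin t → α, (∏ b, y (J b)) ^ q) ^ (1 / q) *
          (∑ J : Fin t → α, (∑ i, ∏ b, A i (J b)) ^ (t : ℝ)) ^ (1 / (t : ℝ)) :=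
        Real.inner_le_Lp_mul_Lq_of_nonneg univ hqt (fun J _ => hy J) (fun J _ => hS J)
    _ = pNorm q x ^ t * homKtt A t ^ (1 / (t : ℝ)) := by
        congr 1
        · rw [pNorm, Real.rpow_pow_comm (sum_nonneg fun _ _ => Real.rpow_nonneg (abs_nonneg _) _),
            Fintype.sum_pow]
          simp_rw [Real.finsetProd_rpow _ _ (fun b _ => abs_nonneg (x _))]
          rfl
        · simp_rw [Real.rpow_natCast]
          rfl

theorem pNorm_mulVec_le {t : ℕ} (ht : 1 < (t : ℝ)) {A : Matrix β α ℝ}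
    (hA : ∀ i j, 0 ≤ A i j) (x : α → ℝ) :
    pNorm t (A *ᵥ x) ≤ homKtt A t ^ ((t : ℝ) ^ 2)⁻¹ * pNorm (t / (t - 1)) x := by
  have ht0 : (t : ℝ) ≠ 0 := by positivity
  have hhom := homKtt_nonneg hA t
  refine (pow_le_pow_iff_left₀ (pNorm_nonneg _ _)
    (mul_nonneg (Real.rpow_nonneg hhom _) (pNorm_nonneg _ _)) (n := t) (by exact_mod_cast ht0)).1 ?_
  rw [mul_pow, mul_comm, ← Real.rpow_natCast (homKtt A t ^ _), ← Real.rpow_mul hhom]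
  refine (pNorm_mulVec_pow_le ht hA x).trans_eq ?_
  congr 2
  field_simp

lemma adjMat_nonneg {n : ℕ} (G : SimpleGraph (Fin n)) (i j : Fin n) : 0 ≤ adjMat G i j := by
  unfold adjMat
  split_ifs <;> norm_num

/-- Operator-norm certificate for K_{t,t}: for every t ≥ 2 and every graph G with
adjacency matrix A, hom(K_{t,t}, G) = ∑_{J ∈ [n]^t} (∑_i ∏_b a_{i,J b})^t is at least
‖A‖_{q→t}^{t²} with q = t/(t-1). -/
theorem stmt0 (t : ℕ) (ht : 2 ≤ t) (n : ℕ) (G : SimpleGraph (Fin n)) :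
    (∑ J : Fin t → Fin n, (∑ i, ∏ b, adjMat G i (J b)) ^ t)
      ≥ opNorm ((t : ℝ) / ((t : ℝ) - 1)) (t : ℝ) (adjMat G) ^ (t ^ 2) := by
  have ht' : 1 < (t : ℝ) := Nat.one_lt_cast.2 ht
  have hhom := homKtt_nonneg (adjMat_nonneg G) t
  have hbound : opNorm (t / (t - 1)) t (adjMat G) ≤ homKtt (adjMat G) t ^ ((t : ℝ) ^ 2)⁻¹ :=
    opNorm_le_bound (Real.rpow_nonneg hhom _) fun x _ => pNorm_mulVec_le ht' (adjMat_nonneg G) x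
  calc opNorm (t / (t - 1)) t (adjMat G) ^ (t ^ 2)
      ≤ (homKtt (adjMat G) t ^ ((t : ℝ) ^ 2)⁻¹) ^ (t ^ 2) :=
        pow_le_pow_left₀ (opNorm_nonneg _ _ _) hbound _
    _ = homKtt (adjMat G) t := by
        rw [← Nat.cast_pow]
        exact Real.rpow_inv_natCast_pow hhom (by positivity)
end

section
/- Let t ≥ 2 and let G be a graph with 2e(G) = M > 0, adjacency matrix A, and spectral radius λ. Then hom(K_{t,t}, G) ≥ λ^{2t(t-1)} / M^{t(t-2)}. -/
/-!
Let `x = |v|` for an eigenvector `v` of `λ`, so that `|λ| x ≤ A x` entrywise, and let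
`y = x ^ (1 / (t - 1))`. Writing `hom(K_{t,t}, G) = ∑_{w ∈ V^t} c(w)^t`, where `c(w)` is the number
of common neighbours of `w`, three applications of Hölder's inequality give
`(|λ| ∑ y^t)^(t-1) ≤ M^(t-2) ∑ x^(t-1) Ax`, `(∑ x^(t-1) Ax)^t ≤ (∑ x^t)^(t-1) ∑ (Ax)^t` and
`(∑ (Ax)^t)^t ≤ (∑ y^t)^(t(t-1)) hom(K_{t,t}, G)`. Chaining them with `|λ|^t ∑ x^t ≤ ∑ (Ax)^t`
and cancelling the power of `∑ y^t` gives the bound.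
-/

open scoped Classical BigOperators

open Finset Matrix

section MeanInequalities

variable {ι : Type*} [Fintype ι]

theorem pow_sum_mul_le_pow_sum_mul_sum_mul_pow (k : ℕ) {a f : ι → ℝ}
    (ha : ∀ i, 0 ≤ a i) (hf : ∀ i, 0 ≤ f i) :
    (∑ i, a i * f i) ^ (k + 1) ≤ (∑ i, a i) ^ k * ∑ i, a i * f i ^ (k + 1) := by
  have hp : (1 : ℝ) ≤ (k + 1 : ℕ) := by norm_cast; omega
  have hk : ((k + 1 : ℕ) : ℝ) ≠ 0 := by positivity
  have hA : 0 ≤ ∑ i, a i := sum_nonneg fun i _ => ha i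
  have hB : 0 ≤ ∑ i, a i * f i ^ (k + 1) :=
    sum_nonneg fun i _ => mul_nonneg (ha i) (pow_nonneg (hf i) _)
  have holder := Real.inner_le_weight_mul_Lp_of_nonneg univ hp a f ha hf
  simp only [Real.rpow_natCast] at holder
  calc (∑ i, a i * f i) ^ (k + 1)
      ≤ ((∑ i, a i) ^ (1 - ((k + 1 : ℕ) : ℝ)⁻¹) *
          (∑ i, a i * f i ^ (k + 1)) ^ ((k + 1 : ℕ) : ℝ)⁻¹) ^ (k + 1) :=
        pow_le_pow_left₀ (sum_nonneg fun i _ => mul_nonneg (ha i) (hf i)) holder _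
    _ = (∑ i, a i) ^ k * ∑ i, a i * f i ^ (k + 1) := by
        rw [mul_pow, ← Real.rpow_mul_natCast hA, ← Real.rpow_mul_natCast hB, sub_mul, one_mul,
          inv_mul_cancel₀ hk, Real.rpow_one]
        push_cast
        rw [add_sub_cancel_right, Real.rpow_natCast]

-- Hölder's inequality with exponents `(k + 2) / (k + 1)` and `k + 2`, free of real powers.
theorem pow_sum_pow_mul_le (k : ℕ) {r v : ι → ℝ} (hr : ∀ i, 0 ≤ r i) (hv : ∀ i, 0 ≤ v i) :
    (∑ i, r i ^ (k + 1) * v i) ^ (k + 2) ≤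
      (∑ i, r i ^ (k + 2)) ^ (k + 1) * ∑ i, v i ^ (k + 2) := by
  have h_mul : ∀ i, r i ^ (k + 2) * (v i / r i) = r i ^ (k + 1) * v i := by
    intro i
    rcases eq_or_ne (r i) 0 with h | h
    · simp [h]
    · field_simp
      ring
  have h_pow : ∀ i, r i ^ (k + 2) * (v i / r i) ^ (k + 2) ≤ v i ^ (k + 2) := by
    intro i
    rcases eq_or_ne (r i) 0 with h | h
    · simp [h, pow_nonneg (hv i)]
    · rw [div_pow, mul_div_cancel₀ _ (pow_ne_zero _ h)]
  calc (∑ i, r i ^ (k + 1) * v i) ^ (k + 2)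
      = (∑ i, r i ^ (k + 2) * (v i / r i)) ^ (k + 2) := by simp only [h_mul]
    _ ≤ (∑ i, r i ^ (k + 2)) ^ (k + 1) * ∑ i, r i ^ (k + 2) * (v i / r i) ^ (k + 2) :=
        pow_sum_mul_le_pow_sum_mul_sum_mul_pow (k + 1) (fun i => pow_nonneg (hr i) _)
          (fun i => div_nonneg (hv i) (hr i))
    _ ≤ (∑ i, r i ^ (k + 2)) ^ (k + 1) * ∑ i, v i ^ (k + 2) := by
        gcongr with i
        · exact pow_nonneg (sum_nonneg fun i _ => pow_nonneg (hr i) _) _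
        · exact h_pow i

end MeanInequalities

-- `w` is the image of one side of `K_{t,t}`, and `∑ i, ∏ j, A i (w j)` counts the possible images
-- of each vertex of the other side.
noncomputable def completeBipartiteHomCount {V : Type*} [Fintype V] (A : Matrix V V ℝ) (t : ℕ) :
    ℝ :=
  ∑ w : Fin t → V, (∑ i, ∏ j, A i (w j)) ^ t

section CompleteBipartite

variable {V : Type*} [Fintype V] {A : Matrix V V ℝ}

theorem sum_mulVec_pow_s1 (A : Matrix V V ℝ) (x : V → ℝ) (t : ℕ) :
    ∑ i, (A *ᵥ x) i ^ t = ∑ w : Fin t → V, (∏ j, x (w j)) * ∑ i, ∏ j, A i (w j) := by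
  simp only [mulVec, dotProduct, Fintype.sum_pow, mul_sum, ← prod_mul_distrib]
  rw [sum_comm]
  simp only [mul_comm]

theorem sum_mulVec_pow_pow_le (k : ℕ) (hA : ∀ i j, 0 ≤ A i j) {x y : V → ℝ}
    (hy : ∀ i, 0 ≤ y i) (hyx : ∀ i, y i ^ (k + 1) = x i) :
    (∑ i, (A *ᵥ x) i ^ (k + 2)) ^ (k + 2) ≤
      (∑ i, y i ^ (k + 2)) ^ ((k + 2) * (k + 1)) * completeBipartiteHomCount A (k + 2) := by
  have hx : ∀ w : Fin (k + 2) → V, ∏ j, x (w j) = (∏ j, y (w j)) ^ (k + 1) := fun w => by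
    simp only [← hyx, prod_pow]
  have hy_pow :
      (∑ i, y i ^ (k + 2)) ^ (k + 2) = ∑ w : Fin (k + 2) → V, (∏ j, y (w j)) ^ (k + 2) := by
    simp only [Fintype.sum_pow, prod_pow]
  rw [sum_mulVec_pow_s1, pow_mul, hy_pow, completeBipartiteHomCount]
  simp only [hx]
  exact pow_sum_pow_mul_le k (fun (w : Fin (k + 2) → V) => prod_nonneg fun j _ => hy (w j))
    (fun (w : Fin (k + 2) → V) => sum_nonneg fun i _ => prod_nonneg fun j _ => hA i (w j))

theorem pow_sum_mul_mulVec_le (k : ℕ) (hA : A.IsSymm) (hA0 : ∀ i j, 0 ≤ A i j) {x y : V → ℝ}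
    (hx : ∀ i, 0 ≤ x i) (hy : ∀ i, 0 ≤ y i) (hyx : ∀ i, y i ^ (k + 1) = x i) :
    (∑ i, y i * (A *ᵥ x) i) ^ (k + 1) ≤
      (∑ i, ∑ j, A i j) ^ k * ∑ i, x i ^ (k + 1) * (A *ᵥ x) i := by
  have h_sum : ∑ i, y i * (A *ᵥ x) i = ∑ p : V × V, A p.1 p.2 * (y p.1 * x p.2) := by
    simp only [Fintype.sum_prod_type, mulVec, dotProduct, mul_sum]
    exact sum_congr rfl fun i _ => sum_congr rfl fun j _ => by ring
  have h_pow_sum : ∑ p : V × V, A p.1 p.2 * (y p.1 * x p.2) ^ (k + 1) =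
      ∑ i, x i ^ (k + 1) * (A *ᵥ x) i := by
    simp only [Fintype.sum_prod_type, mulVec, dotProduct, mul_sum, mul_pow, hyx]
    rw [sum_comm]
    exact sum_congr rfl fun i _ => sum_congr rfl fun j _ => by rw [hA.apply j i]; ring
  rw [h_sum, ← h_pow_sum, ← Fintype.sum_prod_type' (f := fun i j => A i j)]
  exact pow_sum_mul_le_pow_sum_mul_sum_mul_pow k (fun p => hA0 p.1 p.2)
    (fun p => mul_nonneg (hy p.1) (hx p.2))

theorem pow_le_mul_completeBipartiteHomCount (k : ℕ) (hA : A.IsSymm) (hA0 : ∀ i j, 0 ≤ A i j)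
    {lam : ℝ} (hlam : 0 ≤ lam) {x : V → ℝ} (hx0 : ∀ i, 0 ≤ x i) (hx : x ≠ 0)
    (hAx : ∀ i, lam * x i ≤ (A *ᵥ x) i) :
    lam ^ (2 * (k + 2) * (k + 1)) ≤
      completeBipartiteHomCount A (k + 2) * (∑ i, ∑ j, A i j) ^ ((k + 2) * k) := by
  set y : V → ℝ := fun i => x i ^ ((k + 1 : ℕ) : ℝ)⁻¹
  have hy0 : ∀ i, 0 ≤ y i := fun i => Real.rpow_nonneg (hx0 i) _
  have hyx : ∀ i, y i ^ (k + 1) = x i := fun i => Real.rpow_inv_natCast_pow (hx0 i) (by omega)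
  set g := A *ᵥ x
  set M := ∑ i, ∑ j, A i j
  set H := completeBipartiteHomCount A (k + 2)
  set P := ∑ i, y i ^ (k + 2)
  set Q := ∑ i, x i ^ (k + 2)
  set N := ∑ i, g i ^ (k + 2)
  set S := ∑ i, x i ^ (k + 1) * g i
  have hg0 : ∀ i, 0 ≤ g i := fun i => (mul_nonneg hlam (hx0 i)).trans (hAx i)
  have hM : 0 ≤ M := sum_nonneg fun i _ => sum_nonneg fun j _ => hA0 i j
  have hQ : 0 ≤ Q := sum_nonneg fun i _ => pow_nonneg (hx0 i) _
  have hN : 0 ≤ N := sum_nonneg fun i _ => pow_nonneg (hg0 i) _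
  have hS : 0 ≤ S := sum_nonneg fun i _ => mul_nonneg (pow_nonneg (hx0 i) _) (hg0 i)
  have hP : 0 < P := by
    obtain ⟨i, hi⟩ := Function.ne_iff.mp hx
    refine sum_pos' (fun i _ => pow_nonneg (hy0 i) _) ⟨i, mem_univ i, ?_⟩
    refine pow_pos ((hy0 i).lt_of_ne' fun h => hi ?_) _
    rw [← hyx i, h, zero_pow (by omega), Pi.zero_apply]
  have hPS : (lam * P) ^ (k + 1) ≤ M ^ k * S := by
    have hP_le : lam * P ≤ ∑ i, y i * g i := by
      rw [mul_sum]
      refine sum_le_sum fun i _ => ?_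
      calc lam * y i ^ (k + 2) = y i * (lam * x i) := by rw [← hyx i]; ring
        _ ≤ y i * g i := mul_le_mul_of_nonneg_left (hAx i) (hy0 i)
    calc (lam * P) ^ (k + 1) ≤ (∑ i, y i * g i) ^ (k + 1) := by gcongr
      _ ≤ M ^ k * S := pow_sum_mul_mulVec_le k hA hA0 hx0 hy0 hyx
  have hSN : S ^ (k + 2) ≤ Q ^ (k + 1) * N := pow_sum_pow_mul_le k hx0 hg0
  have hQN : lam ^ (k + 2) * Q ≤ N := by
    simp only [Q, N, mul_sum, ← mul_pow]
    gcongr with i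
    exacts [mul_nonneg hlam (hx0 i), hAx i]
  have hNH : N ^ (k + 2) ≤ P ^ ((k + 2) * (k + 1)) * H := sum_mulVec_pow_pow_le k hA0 hy0 hyx
  have key : lam ^ (2 * (k + 2) * (k + 1)) * P ^ ((k + 2) * (k + 1)) ≤
      H * M ^ ((k + 2) * k) * P ^ ((k + 2) * (k + 1)) :=
    calc lam ^ (2 * (k + 2) * (k + 1)) * P ^ ((k + 2) * (k + 1))
        = lam ^ ((k + 2) * (k + 1)) * ((lam * P) ^ (k + 1)) ^ (k + 2) := by ring
      _ ≤ lam ^ ((k + 2) * (k + 1)) * (M ^ k * S) ^ (k + 2) := by gcongr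
      _ = M ^ ((k + 2) * k) * lam ^ ((k + 2) * (k + 1)) * S ^ (k + 2) := by ring
      _ ≤ M ^ ((k + 2) * k) * lam ^ ((k + 2) * (k + 1)) * (Q ^ (k + 1) * N) := by gcongr
      _ = M ^ ((k + 2) * k) * ((lam ^ (k + 2) * Q) ^ (k + 1) * N) := by ring
      _ ≤ M ^ ((k + 2) * k) * (N ^ (k + 1) * N) := by gcongr
      _ = M ^ ((k + 2) * k) * N ^ (k + 2) := by ring
      _ ≤ M ^ ((k + 2) * k) * (P ^ ((k + 2) * (k + 1)) * H) := by gcongr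
      _ = H * M ^ ((k + 2) * k) * P ^ ((k + 2) * (k + 1)) := by ring
  exact le_of_mul_le_mul_right key (by positivity)

end CompleteBipartite

section Spectral

variable {α : Type*} [Fintype α]

-- `specRad A = sSup ∅ = 0` when `A` has no real eigenvalue.
theorem specRad_eq_zero_or_exists_mulVec_eq_smul (A : Matrix α α ℝ) :
    specRad A = 0 ∨ ∃ v : α → ℝ, v ≠ 0 ∧ A *ᵥ v = specRad A • v := by
  set S := {μ : ℝ | ∃ x : α → ℝ, x ≠ 0 ∧ A *ᵥ x = μ • x}
  have hS : S.Finite := (Module.End.finite_hasEigenvalue (toLin' A)).subset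
    fun μ ⟨x, hx, hAx⟩ => Module.End.hasEigenvalue_of_hasEigenvector
      ⟨Module.End.mem_eigenspace_iff.mpr (by simpa using hAx), hx⟩
  rcases S.eq_empty_or_nonempty with h | h
  · exact .inl ((congrArg sSup h).trans Real.sSup_empty)
  · exact .inr (h.csSup_mem hS)

theorem abs_mul_abs_le_mulVec_abs {A : Matrix α α ℝ} (hA : ∀ i j, 0 ≤ A i j) {μ : ℝ}
    {v : α → ℝ} (hv : A *ᵥ v = μ • v) (i : α) : |μ| * |v i| ≤ (A *ᵥ fun j => |v j|) i :=
  calc |μ| * |v i| = |∑ j, A i j * v j| := by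
        rw [← abs_mul, ← smul_eq_mul, ← Pi.smul_apply, ← hv]; rfl
    _ ≤ ∑ j, |A i j * v j| := abs_sum_le_sum_abs _ _
    _ = (A *ᵥ fun j => |v j|) i := by
        simp only [abs_mul, abs_of_nonneg (hA _ _)]; rfl

end Spectral

section Graph

variable {V : Type*} [Fintype V] (G : SimpleGraph V) [DecidableRel G.Adj]

theorem sum_sum_adjMatrix_apply : ∑ i, ∑ j, G.adjMatrix ℝ i j = 2 * #G.edgeFinset := by
  have := G.natCast_card_dart_eq_dotProduct (α := ℝ)
  rw [G.dart_card_eq_twice_card_edges] at this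
  simpa [dotProduct, mulVec] using this.symm

def homCompleteBipartiteEquiv (t : ℕ) :
    (completeBipartiteGraph (Fin t) (Fin t) →g G) ≃
      {p : (Fin t → V) × (Fin t → V) // ∀ i j, G.Adj (p.1 i) (p.2 j)} where
  toFun φ := ⟨(φ ∘ Sum.inl, φ ∘ Sum.inr), fun i j => φ.map_rel (by simp)⟩
  invFun p := ⟨Sum.elim p.1.1 p.1.2, by
    rintro (i | i) (j | j) h <;> simp at h
    · exact p.2 i j
    · exact (p.2 j i).symm⟩
  left_inv φ := by ext (i | i) <;> rfl
  right_inv p := rfl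

theorem natCast_card_hom_completeBipartiteGraph (t : ℕ) :
    (Nat.card (completeBipartiteGraph (Fin t) (Fin t) →g G) : ℝ) =
      completeBipartiteHomCount (G.adjMatrix ℝ) t := by
  have h_indicator : ∀ u w : Fin t → V, (if ∀ i j, G.Adj (u i) (w j) then (1 : ℝ) else 0) =
      ∏ i, ∏ j, G.adjMatrix ℝ (u i) (w j) := fun u w => by
    simp only [SimpleGraph.adjMatrix_apply, prod_boole, mem_univ, forall_const]
  rw [Nat.card_congr (homCompleteBipartiteEquiv G t), Nat.card_eq_fintype_card,
    Fintype.card_subtype, natCast_card_filter, Fintype.sum_prod_type, sum_comm,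
    completeBipartiteHomCount]
  simp only [h_indicator, Fintype.sum_pow]

end Graph

theorem stmt1_general (t : ℕ) (ht : 2 ≤ t) (n : ℕ) (G : SimpleGraph (Fin n)) :
    (Nat.card (completeBipartiteGraph (Fin t) (Fin t) →g G) : ℝ)
      ≥ specRad (adjMat G) ^ (2 * t * (t - 1))
          / (2 * (Nat.card G.edgeSet : ℝ)) ^ (t * (t - 2)) := by
  obtain ⟨k, rfl⟩ : ∃ k, t = k + 2 := ⟨t - 2, by omega⟩
  have hA0 : ∀ i j, 0 ≤ G.adjMatrix ℝ i j := fun i j => by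
    rw [SimpleGraph.adjMatrix_apply]; split_ifs <;> norm_num
  have hM : 2 * (Nat.card G.edgeSet : ℝ) = ∑ i, ∑ j, G.adjMatrix ℝ i j := by
    rw [sum_sum_adjMatrix_apply, Nat.card_eq_fintype_card, SimpleGraph.edgeFinset_card]
  rw [show adjMat G = G.adjMatrix ℝ from rfl, show k + 2 - 1 = k + 1 by omega,
    show k + 2 - 2 = k by omega]
  refine div_le_of_le_mul₀ (by positivity) (Nat.cast_nonneg _) ?_
  rcases specRad_eq_zero_or_exists_mulVec_eq_smul (G.adjMatrix ℝ) with h0 | ⟨v, hv, hAv⟩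
  · rw [h0, zero_pow (by positivity)]
    positivity
  rw [natCast_card_hom_completeBipartiteGraph, hM, ← Even.pow_abs ⟨(k + 2) * (k + 1), by ring⟩]
  exact pow_le_mul_completeBipartiteHomCount k G.isSymm_adjMatrix hA0 (abs_nonneg _)
    (fun i => abs_nonneg (v i)) (fun h => hv (funext fun i => abs_eq_zero.mp (congrFun h i)))
    (abs_mul_abs_le_mulVec_abs hA0 hAv)

/-- Spectral Sidorenko inequality for K_{t,t}:
hom(K_{t,t}, G) ≥ λ(G)^{2t(t-1)} / M(G)^{t(t-2)} where M(G) = 2e(G) > 0. -/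
theorem stmt1 (t : ℕ) (ht : 2 ≤ t) (n : ℕ) (G : SimpleGraph (Fin n))
    (hM : 0 < Nat.card G.edgeSet) :
    (Nat.card (completeBipartiteGraph (Fin t) (Fin t) →g G) : ℝ)
      ≥ specRad (adjMat G) ^ (2 * t * (t - 1))
          / (2 * (Nat.card G.edgeSet : ℝ)) ^ (t * (t - 2)) :=
  stmt1_general t ht n G
end

section
/- Let A be a symmetric nonnegative real n×n matrix, and let s, s' ∈ [1,∞] with 1/s + 1/s' = 1 and s ≥ 2. If N := ‖A²‖_{s'→s}, then ‖A‖_{s'→2} ≤ N^{1/2} and ‖A‖_{2→s} ≤ N^{1/2}; consequently, for σ and σ' defined by 1/σ = 1/2·(1/2) + 1/2·(1/s) and 1/σ' = 1/2·(1/s') + 1/2·(1/2), one has ‖A‖_{σ'→σ}² ≤ ‖A²‖_{s'→s}. -/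
open scoped Classical BigOperators ENNReal

/-- The ℓ^p norm of a real vector for an extended-real exponent `p ∈ [1,∞]`. -/
noncomputable def pNormE {α : Type*} [Fintype α] (p : ℝ≥0∞) (x : α → ℝ) : ℝ :=
  if p = ⊤ then ⨆ i, |x i| else (∑ i, |x i| ^ p.toReal) ^ (1 / p.toReal)

/-- The ℓ^p → ℓ^r operator norm of a real matrix, with extended-real exponents. -/
noncomputable def opNormE {α β : Type*} [Fintype α] [Fintype β] (p r : ℝ≥0∞)
    (A : Matrix β α ℝ) : ℝ :=
  sSup {c : ℝ | ∃ x : α → ℝ, x ≠ 0 ∧ c = pNormE r (A.mulVec x) / pNormE p x}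

/-!
Write `N = ‖A²‖_{s'→s}`. By symmetry, `‖Ax‖₂² = ⟪A²x, x⟫ ≤ ‖A²x‖_s ‖x‖_{s'} ≤ N ‖x‖_{s'}²`,
which is the `s' → 2` bound; the `2 → s` bound is its dual, obtained by testing `Ax` against a
norming vector of `ℓ^{s'}` and moving `A` across the pairing. For a matrix with nonnegative
entries, Riesz–Thorin at `θ = 1/2` needs no complex analysis: writing `|x|` as a product of two
powers of itself, one for each endpoint exponent, splits every term of the bilinear form
`Σ yᵢ Aᵢⱼ xⱼ` into a geometric mean, and Cauchy–Schwarz over the pairs `(i, j)` bounds the form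
by the geometric mean of the two endpoint bounds.
-/

open Matrix

section Norms

variable {α : Type*} [Fintype α]

lemma pNormE_nonneg (p : ℝ≥0∞) (x : α → ℝ) : 0 ≤ pNormE p x := by
  unfold pNormE
  split_ifs
  · exact Real.iSup_nonneg fun i => abs_nonneg _
  · positivity

lemma pNormE_of_ne_top {p : ℝ≥0∞} (hp : p ≠ ⊤) (x : α → ℝ) :
    pNormE p x = (∑ i, |x i| ^ p.toReal) ^ p.toReal⁻¹ := by
  simp [pNormE, hp]

lemma pNormE_eq_norm_toLp {p : ℝ≥0∞} (hp : p ≠ 0) (x : α → ℝ) :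
    pNormE p x = ‖WithLp.toLp p x‖ := by
  rcases eq_or_ne p ⊤ with rfl | hp'
  · simp [pNormE, PiLp.norm_eq_ciSup]
  · simp [pNormE_of_ne_top hp', PiLp.norm_eq_sum (ENNReal.toReal_pos hp hp')]

lemma pNormE_zero {p : ℝ≥0∞} (hp : p ≠ 0) : pNormE p (0 : α → ℝ) = 0 := by
  rcases eq_or_ne p ⊤ with rfl | hp'
  · simp [pNormE]
  · simp [pNormE_of_ne_top hp', ENNReal.toReal_pos hp hp' |>.ne']

lemma pNormE_pos {p : ℝ≥0∞} (hp : 1 ≤ p) {x : α → ℝ} (hx : x ≠ 0) : 0 < pNormE p x := by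
  have : Fact (1 ≤ p) := ⟨hp⟩
  rw [pNormE_eq_norm_toLp (zero_lt_one.trans_le hp).ne']
  simpa using hx

lemma pNormE_abs (p : ℝ≥0∞) (x : α → ℝ) : pNormE p |x| = pNormE p x := by
  simp [pNormE]

lemma pNormE_one (x : α → ℝ) : pNormE 1 x = ∑ i, |x i| := by
  simp [pNormE_of_ne_top]

lemma pNormE_top (x : α → ℝ) : pNormE ⊤ x = ⨆ i, |x i| := by
  simp [pNormE]

lemma pNormE_two_sq (x : α → ℝ) : pNormE 2 x ^ 2 = x ⬝ᵥ x := by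
  rw [pNormE_eq_norm_toLp two_ne_zero, PiLp.norm_sq_eq_of_L2]
  simp [dotProduct, sq]

lemma pNormE_rpow {p : ℝ≥0∞} (hp : p ≠ ⊤) {f : α → ℝ} (hf : 0 ≤ f) (c : ℝ) :
    pNormE p (fun i => f i ^ c) = (∑ i, f i ^ (c * p.toReal)) ^ p.toReal⁻¹ := by
  simp only [pNormE_of_ne_top hp]
  congr 1
  refine Finset.sum_congr rfl fun i _ => ?_
  rw [abs_of_nonneg (Real.rpow_nonneg (hf i) c), ← Real.rpow_mul (hf i)]

end Norms

section Duality

variable {α : Type*} [Fintype α]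

lemma abs_le_pNormE_top (x : α → ℝ) (i : α) : |x i| ≤ pNormE ⊤ x :=
  pNormE_top x ▸ le_ciSup (f := fun j => |x j|) (Set.finite_range _).bddAbove i

lemma dotProduct_le_pNormE_top_mul_pNormE_one (u v : α → ℝ) :
    u ⬝ᵥ v ≤ pNormE ⊤ u * pNormE 1 v := by
  rw [pNormE_one, Finset.mul_sum]
  refine Finset.sum_le_sum fun i _ => ?_
  calc u i * v i ≤ |u i| * |v i| := by rw [← abs_mul]; exact le_abs_self _
    _ ≤ pNormE ⊤ u * |v i| := by gcongr; exact abs_le_pNormE_top u i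

theorem dotProduct_le_pNormE_mul_pNormE (p q : ℝ≥0∞) [p.HolderConjugate q] (u v : α → ℝ) :
    u ⬝ᵥ v ≤ pNormE p u * pNormE q v := by
  rcases eq_or_ne p ⊤ with rfl | hp
  · rw [(ENNReal.HolderConjugate.eq_top_iff_eq_one ⊤ q).mp rfl]
    exact dotProduct_le_pNormE_top_mul_pNormE_one u v
  rcases eq_or_ne q ⊤ with rfl | hq
  · rw [(ENNReal.HolderConjugate.eq_top_iff_eq_one ⊤ p).mp rfl, dotProduct_comm, mul_comm]
    exact dotProduct_le_pNormE_top_mul_pNormE_one v u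
  simpa [dotProduct, pNormE_of_ne_top, hp, hq] using
    Real.inner_le_Lp_mul_Lq Finset.univ u v (ENNReal.HolderConjugate.toReal_of_ne_top hp hq)

lemma abs_sign_le_one (x : ℝ) : |(SignType.sign x : ℝ)| ≤ 1 := by
  rcases lt_trichotomy x 0 with h | rfl | h <;> simp [*]

lemma exists_pNormE_one_le_one_and_pNormE_top_le_dotProduct (u : α → ℝ) :
    ∃ v : α → ℝ, pNormE 1 v ≤ 1 ∧ pNormE ⊤ u ≤ u ⬝ᵥ v := by
  cases isEmpty_or_nonempty α
  · exact ⟨0, by simp [pNormE_one], by simp [pNormE_top]⟩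
  obtain ⟨i₀, -, hi₀⟩ := Finset.exists_max_image Finset.univ (fun i => |u i|) Finset.univ_nonempty
  refine ⟨Pi.single i₀ (SignType.sign (u i₀) : ℝ), ?_, ?_⟩
  · simpa [pNormE_one, Pi.single_apply, apply_ite] using abs_sign_le_one (u i₀)
  · rw [pNormE_top, dotProduct_single, self_mul_sign]
    exact ciSup_le fun i => hi₀ i (Finset.mem_univ i)

lemma exists_pNormE_top_le_one_and_pNormE_one_le_dotProduct (u : α → ℝ) :
    ∃ v : α → ℝ, pNormE ⊤ v ≤ 1 ∧ pNormE 1 u ≤ u ⬝ᵥ v := by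
  refine ⟨fun i => SignType.sign (u i), ?_, ?_⟩
  · rw [pNormE_top]
    exact Real.iSup_le (fun i => abs_sign_le_one (u i)) zero_le_one
  · simp [pNormE_one, dotProduct]

lemma sum_abs_div_pNormE_rpow {p : ℝ≥0∞} (hp₀ : p ≠ 0) (hp : p ≠ ⊤) {u : α → ℝ}
    (hu : 0 < pNormE p u) : ∑ i, (|u i| / pNormE p u) ^ p.toReal = 1 := by
  have hpow : pNormE p u ^ p.toReal = ∑ i, |u i| ^ p.toReal := by
    rw [pNormE_of_ne_top hp, ← Real.rpow_mul (by positivity),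
      inv_mul_cancel₀ (ENNReal.toReal_pos hp₀ hp).ne', Real.rpow_one]
  calc ∑ i, (|u i| / pNormE p u) ^ p.toReal
      = ∑ i, |u i| ^ p.toReal / pNormE p u ^ p.toReal :=
        Finset.sum_congr rfl fun i _ => Real.div_rpow (abs_nonneg _) hu.le _
    _ = 1 := by rw [← Finset.sum_div, ← hpow, div_self (by positivity)]

lemma exists_pNormE_le_one_and_pNormE_le_dotProduct_of_ne_top {p q : ℝ≥0∞}
    [p.HolderConjugate q] (hp : p ≠ ⊤) (hq : q ≠ ⊤) (u : α → ℝ) :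
    ∃ v : α → ℝ, pNormE q v ≤ 1 ∧ pNormE p u ≤ u ⬝ᵥ v := by
  rcases (pNormE_nonneg p u).eq_or_lt with hU | hU
  · exact ⟨0, by simp [pNormE_zero (ENNReal.HolderConjugate.ne_zero q p)], by simpa using hU.ge⟩
  have hpq := ENNReal.HolderConjugate.toReal_of_ne_top hp hq
  set U := pNormE p u
  set P := p.toReal
  have hsum : ∑ i, (|u i| / U) ^ P = 1 :=
    sum_abs_div_pNormE_rpow (ENNReal.HolderConjugate.ne_zero p q) hp hU
  set w : α → ℝ := fun i => (|u i| / U) ^ (P - 1)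
  have hw : ∀ i, 0 ≤ w i := fun i => by positivity
  -- the extremal vector of Hölder's inequality
  refine ⟨fun i => SignType.sign (u i) * w i, ?_, ?_⟩
  · have hle : ∑ i, |SignType.sign (u i) * w i| ^ q.toReal ≤ 1 := calc
      _ ≤ ∑ i, w i ^ q.toReal := by
        gcongr with i
        rw [abs_mul, abs_of_nonneg (hw i)]
        exact mul_le_of_le_one_left (hw i) (abs_sign_le_one _)
      _ = 1 := by
        rw [← hsum]
        refine Finset.sum_congr rfl fun i _ => ?_
        rw [← Real.rpow_mul (by positivity), hpq.sub_one_mul_conj]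
    rw [pNormE_of_ne_top hq]
    exact Real.rpow_le_one (by positivity) hle (by positivity)
  · have hterm : ∀ i, u i * (SignType.sign (u i) * w i) = U * (|u i| / U) ^ P := fun i => by
      rw [← mul_assoc, self_mul_sign, ← add_sub_cancel 1 P, Real.rpow_one_add' (by positivity)
        (by linarith [hpq.lt]), ← mul_assoc, mul_div_cancel₀ _ hU.ne']
    simp only [dotProduct, hterm, ← Finset.mul_sum, hsum, mul_one, le_refl]

theorem exists_pNormE_le_one_and_pNormE_le_dotProduct (p q : ℝ≥0∞) [p.HolderConjugate q]
    (u : α → ℝ) : ∃ v : α → ℝ, pNormE q v ≤ 1 ∧ pNormE p u ≤ u ⬝ᵥ v := by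
  rcases eq_or_ne p ⊤ with rfl | hp
  · rw [(ENNReal.HolderConjugate.eq_top_iff_eq_one ⊤ q).mp rfl]
    exact exists_pNormE_one_le_one_and_pNormE_top_le_dotProduct u
  rcases eq_or_ne q ⊤ with rfl | hq
  · rw [(ENNReal.HolderConjugate.eq_top_iff_eq_one ⊤ p).mp rfl]
    exact exists_pNormE_top_le_one_and_pNormE_one_le_dotProduct u
  exact exists_pNormE_le_one_and_pNormE_le_dotProduct_of_ne_top hp hq u

end Duality

section OpNorm

variable {α β : Type*} [Fintype α] [Fintype β] {p r : ℝ≥0∞} (M : Matrix β α ℝ)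

lemma opNormE_nonneg : 0 ≤ opNormE p r M :=
  Real.sSup_nonneg fun _ ⟨_, _, hc⟩ => hc ▸ div_nonneg (pNormE_nonneg _ _) (pNormE_nonneg _ _)

lemma opNormE_le_of_forall (hp : 1 ≤ p) {C : ℝ} (hC : 0 ≤ C)
    (h : ∀ x, pNormE r (M *ᵥ x) ≤ C * pNormE p x) : opNormE p r M ≤ C :=
  Real.sSup_le (fun _ ⟨x, hx, hc⟩ => hc ▸ (div_le_iff₀ (pNormE_pos hp hx)).mpr (h x)) hC

lemma exists_pNormE_mulVec_le (hp : 1 ≤ p) (hr : 1 ≤ r) :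
    ∃ C, ∀ x, pNormE r (M *ᵥ x) ≤ C * pNormE p x := by
  have : Fact (1 ≤ p) := ⟨hp⟩
  have : Fact (1 ≤ r) := ⟨hr⟩
  let T : WithLp p (α → ℝ) →ₗ[ℝ] WithLp r (β → ℝ) :=
    (WithLp.linearEquiv r ℝ (β → ℝ)).symm.toLinearMap ∘ₗ M.mulVecLin ∘ₗ
      (WithLp.linearEquiv p ℝ (α → ℝ)).toLinearMap
  refine ⟨‖LinearMap.toContinuousLinearMap T‖, fun x => ?_⟩
  simpa [pNormE_eq_norm_toLp (zero_lt_one.trans_le hp).ne',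
    pNormE_eq_norm_toLp (zero_lt_one.trans_le hr).ne', T] using
    (LinearMap.toContinuousLinearMap T).le_opNorm (WithLp.toLp p x)

lemma pNormE_mulVec_le_opNormE (hp : 1 ≤ p) (hr : 1 ≤ r) (x : α → ℝ) :
    pNormE r (M *ᵥ x) ≤ opNormE p r M * pNormE p x := by
  rcases eq_or_ne x 0 with rfl | hx
  · simp [pNormE_zero (zero_lt_one.trans_le hp).ne', pNormE_zero (zero_lt_one.trans_le hr).ne']
  have hpos := pNormE_pos hp hx
  obtain ⟨C, hC⟩ := exists_pNormE_mulVec_le M hp hr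
  have hbdd : BddAbove {c | ∃ x, x ≠ 0 ∧ c = pNormE r (M *ᵥ x) / pNormE p x} :=
    ⟨C, fun _ ⟨y, hy, hc⟩ => hc ▸ (div_le_iff₀ (pNormE_pos hp hy)).mpr (hC y)⟩
  exact (div_le_iff₀ hpos).mp (le_csSup hbdd ⟨x, hx, rfl⟩)

end OpNorm

section Exponents

lemma ENNReal.ne_top_and_toReal_inv_eq_of_one_div_eq {p₀ p₁ p : ℝ≥0∞} (hp₀ : p₀ ≠ 0)
    (hp₀' : p₀ ≠ ⊤) (hp₁ : p₁ ≠ 0)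
    (hp : 1 / p = 1 / 2 * (1 / p₀) + 1 / 2 * (1 / p₁)) :
    p ≠ ⊤ ∧ 2 * p.toReal⁻¹ = p₀.toReal⁻¹ + p₁.toReal⁻¹ := by
  have hfin : 1 / 2 * (1 / p₀) ≠ ⊤ ∧ 1 / 2 * (1 / p₁) ≠ ⊤ := by
    constructor <;> simp [ENNReal.mul_eq_top, hp₀, hp₁]
  refine ⟨fun h => ?_, ?_⟩
  · simp [h, eq_comm (a := (0 : ℝ≥0∞)), hp₀'] at hp
  · have := congrArg ENNReal.toReal hp
    rw [ENNReal.toReal_add hfin.1 hfin.2] at this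
    simp [ENNReal.toReal_inv] at this
    linarith

lemma ENNReal.HolderConjugate.of_one_div_eq_midpoint {p₀ q₀ p₁ q₁ p q : ℝ≥0∞}
    [p₀.HolderConjugate q₀] [p₁.HolderConjugate q₁]
    (hp : 1 / p = 1 / 2 * (1 / p₀) + 1 / 2 * (1 / p₁))
    (hq : 1 / q = 1 / 2 * (1 / q₀) + 1 / 2 * (1 / q₁)) : p.HolderConjugate q := by
  rw [ENNReal.holderConjugate_iff, ← one_div, ← one_div, hp, hq]
  calc 1 / 2 * (1 / p₀) + 1 / 2 * (1 / p₁) + (1 / 2 * (1 / q₀) + 1 / 2 * (1 / q₁))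
      = 1 / 2 * (1 / p₀ + 1 / q₀) + 1 / 2 * (1 / p₁ + 1 / q₁) := by ring
    _ = 1 := by
      rw [ENNReal.HolderTriple.one_div_add_one_div p₀ q₀ 1,
        ENNReal.HolderTriple.one_div_add_one_div p₁ q₁ 1]
      simpa using ENNReal.add_halves 1

end Exponents

section Interpolation

variable {α β : Type*} [Fintype α] [Fintype β]

lemma exists_mul_eq_sq_and_pNormE_mul_pNormE_eq {p₀ p₁ p : ℝ≥0∞} (hp₀ : p₀ ≠ 0) (hp₀' : p₀ ≠ ⊤)
    (hp₁ : p₁ ≠ 0) (hp₁' : p₁ ≠ ⊤) (hp : 1 / p = 1 / 2 * (1 / p₀) + 1 / 2 * (1 / p₁))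
    {f : α → ℝ} (hf : 0 ≤ f) :
    ∃ F₀ F₁ : α → ℝ, 0 ≤ F₀ ∧ 0 ≤ F₁ ∧ (∀ i, F₀ i * F₁ i = f i ^ 2) ∧
      pNormE p₀ F₀ * pNormE p₁ F₁ = pNormE p f ^ 2 := by
  obtain ⟨hp', hrel⟩ := ENNReal.ne_top_and_toReal_inv_eq_of_one_div_eq hp₀ hp₀' hp₁ hp
  have ha₀ := ENNReal.toReal_pos hp₀ hp₀'
  have ha₁ := ENNReal.toReal_pos hp₁ hp₁'
  set a := p.toReal
  have ha : 0 < a := inv_pos.mp (by linarith [inv_pos.mpr ha₀, inv_pos.mpr ha₁])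
  have hexp : a / p₀.toReal + a / p₁.toReal = 2 := by
    rw [div_eq_mul_inv, div_eq_mul_inv, ← mul_add, ← hrel, mul_left_comm, mul_inv_cancel₀ ha.ne',
      mul_one]
  set X := ∑ i, f i ^ a
  have hX : 0 ≤ X := Finset.sum_nonneg fun i _ => Real.rpow_nonneg (hf i) a
  refine ⟨fun i => f i ^ (a / p₀.toReal), fun i => f i ^ (a / p₁.toReal),
    fun i => Real.rpow_nonneg (hf i) _, fun i => Real.rpow_nonneg (hf i) _, fun i => ?_, ?_⟩
  · rw [← Real.rpow_add' (hf i) (by rw [hexp]; norm_num), hexp, Real.rpow_two]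
  · have hpf : pNormE p f = X ^ a⁻¹ := by
      simp only [pNormE_of_ne_top hp', abs_of_nonneg (hf _), X, a]
    calc pNormE p₀ (fun i => f i ^ (a / p₀.toReal)) * pNormE p₁ (fun i => f i ^ (a / p₁.toReal))
        = X ^ p₀.toReal⁻¹ * X ^ p₁.toReal⁻¹ := by
          rw [pNormE_rpow hp₀' hf, pNormE_rpow hp₁' hf, div_mul_cancel₀ _ ha₀.ne',
            div_mul_cancel₀ _ ha₁.ne']
      _ = X ^ (a⁻¹ * 2) := by
          rw [← Real.rpow_add' hX (by linarith [inv_pos.mpr ha₀, inv_pos.mpr ha₁]), ← hrel,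
            mul_comm]
      _ = pNormE p f ^ 2 := by rw [hpf, Real.rpow_mul hX, Real.rpow_two]

lemma dotProduct_mulVec_eq_sum_sum (A : Matrix β α ℝ) (f : α → ℝ) (g : β → ℝ) :
    g ⬝ᵥ (A *ᵥ f) = ∑ i, ∑ j, g i * A i j * f j := by
  simp [dotProduct, mulVec, Finset.mul_sum, mul_assoc]

lemma dotProduct_mulVec_le_abs {A : Matrix β α ℝ}
    (hA : ∀ i j, 0 ≤ A i j) (x : α → ℝ) (y : β → ℝ) : y ⬝ᵥ (A *ᵥ x) ≤ |y| ⬝ᵥ (A *ᵥ |x|) := by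
  simp only [dotProduct_mulVec_eq_sum_sum]
  refine Finset.sum_le_sum fun i _ => Finset.sum_le_sum fun j _ => ?_
  calc y i * A i j * x j ≤ |y i * A i j * x j| := le_abs_self _
    _ = |y| i * A i j * |x| j := by simp [abs_mul, abs_of_nonneg (hA i j)]

lemma sum_sum_sqrt_mul_sqrt_le {x y : β → α → ℝ} (hx : ∀ i j, 0 ≤ x i j) (hy : ∀ i j, 0 ≤ y i j) :
    ∑ i, ∑ j, √(x i j) * √(y i j) ≤ √(∑ i, ∑ j, x i j) * √(∑ i, ∑ j, y i j) := by
  simp only [← Fintype.sum_prod_type']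
  exact Real.sum_sqrt_mul_sqrt_le _ (fun k => hx k.1 k.2) (fun k => hy k.1 k.2)

theorem dotProduct_mulVec_le_of_interpolation {A : Matrix β α ℝ} (hA : ∀ i j, 0 ≤ A i j)
    {p₀ p₁ p q₀ q₁ q : ℝ≥0∞} (hp₀ : p₀ ≠ 0) (hp₀' : p₀ ≠ ⊤) (hp₁ : p₁ ≠ 0) (hp₁' : p₁ ≠ ⊤)
    (hq₀ : q₀ ≠ 0) (hq₀' : q₀ ≠ ⊤) (hq₁ : q₁ ≠ 0) (hq₁' : q₁ ≠ ⊤)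
    (hp : 1 / p = 1 / 2 * (1 / p₀) + 1 / 2 * (1 / p₁))
    (hq : 1 / q = 1 / 2 * (1 / q₀) + 1 / 2 * (1 / q₁)) {M₀ M₁ : ℝ}
    (h₀ : ∀ f g, 0 ≤ f → 0 ≤ g → g ⬝ᵥ (A *ᵥ f) ≤ M₀ * (pNormE p₀ f * pNormE q₀ g))
    (h₁ : ∀ f g, 0 ≤ f → 0 ≤ g → g ⬝ᵥ (A *ᵥ f) ≤ M₁ * (pNormE p₁ f * pNormE q₁ g))
    {f : α → ℝ} {g : β → ℝ} (hf : 0 ≤ f) (hg : 0 ≤ g) :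
    g ⬝ᵥ (A *ᵥ f) ≤ √M₀ * √M₁ * (pNormE p f * pNormE q g) := by
  obtain ⟨F₀, F₁, hF₀, hF₁, hFF, hnormF⟩ :=
    exists_mul_eq_sq_and_pNormE_mul_pNormE_eq hp₀ hp₀' hp₁ hp₁' hp hf
  obtain ⟨G₀, G₁, hG₀, hG₁, hGG, hnormG⟩ :=
    exists_mul_eq_sq_and_pNormE_mul_pNormE_eq hq₀ hq₀' hq₁ hq₁' hq hg
  have hnonneg : ∀ {F : α → ℝ} {G : β → ℝ}, 0 ≤ F → 0 ≤ G → ∀ i j, 0 ≤ G i * A i j * F j :=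
    fun hF hG i j => mul_nonneg (mul_nonneg (hG i) (hA i j)) (hF j)
  have hsplit : ∀ i j, g i * A i j * f j = √(G₀ i * A i j * F₀ j) * √(G₁ i * A i j * F₁ j) := by
    intro i j
    rw [← Real.sqrt_mul (hnonneg hF₀ hG₀ i j),
      show G₀ i * A i j * F₀ j * (G₁ i * A i j * F₁ j) = (G₀ i * G₁ i) * A i j ^ 2 * (F₀ j * F₁ j)
        by ring, hGG, hFF, ← mul_pow, ← mul_pow, Real.sqrt_sq (hnonneg hf hg i j)]
  have hN := pNormE_nonneg (α := α)
  have hN' := pNormE_nonneg (α := β)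
  calc g ⬝ᵥ (A *ᵥ f)
      = ∑ i, ∑ j, √(G₀ i * A i j * F₀ j) * √(G₁ i * A i j * F₁ j) := by
        simp only [dotProduct_mulVec_eq_sum_sum, hsplit]
    _ ≤ √(G₀ ⬝ᵥ (A *ᵥ F₀)) * √(G₁ ⬝ᵥ (A *ᵥ F₁)) := by
        simp only [dotProduct_mulVec_eq_sum_sum]
        exact sum_sum_sqrt_mul_sqrt_le (hnonneg hF₀ hG₀) (hnonneg hF₁ hG₁)
    _ ≤ √(M₀ * (pNormE p₀ F₀ * pNormE q₀ G₀)) * √(M₁ * (pNormE p₁ F₁ * pNormE q₁ G₁)) := by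
        gcongr
        exacts [h₀ F₀ G₀ hF₀ hG₀, h₁ F₁ G₁ hF₁ hG₁]
    _ = √M₀ * √M₁ * √((pNormE p₀ F₀ * pNormE p₁ F₁) * (pNormE q₀ G₀ * pNormE q₁ G₁)) := by
        rw [Real.sqrt_mul' _ (mul_nonneg (hN _ _) (hN' _ _)),
          Real.sqrt_mul' _ (mul_nonneg (hN _ _) (hN' _ _)), mul_mul_mul_comm,
          ← Real.sqrt_mul (mul_nonneg (hN _ _) (hN' _ _)), mul_mul_mul_comm (pNormE p₀ F₀)]
    _ = √M₀ * √M₁ * (pNormE p f * pNormE q g) := by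
        rw [hnormF, hnormG, ← mul_pow, Real.sqrt_sq (mul_nonneg (hN _ _) (hN' _ _))]

end Interpolation

namespace Matrix.IsSymm

lemma mulVec_dotProduct {ι : Type*} [Fintype ι] {A : Matrix ι ι ℝ} (hA : A.IsSymm)
    (x y : ι → ℝ) : (A *ᵥ x) ⬝ᵥ y = x ⬝ᵥ (A *ᵥ y) := by
  rw [dotProduct_mulVec, ← mulVec_transpose, hA.eq]

variable {ι : Type*} [Fintype ι] [DecidableEq ι] {A : Matrix ι ι ℝ}
  {s s' : ℝ≥0∞} [s.HolderConjugate s']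

lemma pNormE_two_mulVec_le (hA : A.IsSymm) (x : ι → ℝ) :
    pNormE 2 (A *ᵥ x) ≤ √(opNormE s' s (A ^ 2)) * pNormE s' x := by
  have hsq : pNormE 2 (A *ᵥ x) ^ 2 ≤ opNormE s' s (A ^ 2) * pNormE s' x ^ 2 := calc
    pNormE 2 (A *ᵥ x) ^ 2 = (A ^ 2 *ᵥ x) ⬝ᵥ x := by
      rw [pNormE_two_sq, hA.mulVec_dotProduct, sq, ← mulVec_mulVec, dotProduct_comm]
    _ ≤ pNormE s (A ^ 2 *ᵥ x) * pNormE s' x := dotProduct_le_pNormE_mul_pNormE s s' _ _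
    _ ≤ opNormE s' s (A ^ 2) * pNormE s' x * pNormE s' x := by
      gcongr
      · exact pNormE_nonneg _ _
      · exact pNormE_mulVec_le_opNormE _ (ENNReal.HolderConjugate.one_le s' s)
          (ENNReal.HolderConjugate.one_le s s') x
    _ = opNormE s' s (A ^ 2) * pNormE s' x ^ 2 := by ring
  calc pNormE 2 (A *ᵥ x) ≤ √(opNormE s' s (A ^ 2) * pNormE s' x ^ 2) := Real.le_sqrt_of_sq_le hsq
    _ = √(opNormE s' s (A ^ 2)) * pNormE s' x := by
      rw [Real.sqrt_mul' _ (sq_nonneg _), Real.sqrt_sq (pNormE_nonneg _ _)]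

lemma pNormE_mulVec_le_mul_pNormE_two (hA : A.IsSymm) (x : ι → ℝ) :
    pNormE s (A *ᵥ x) ≤ √(opNormE s' s (A ^ 2)) * pNormE 2 x := by
  obtain ⟨v, hv, hle⟩ := exists_pNormE_le_one_and_pNormE_le_dotProduct s s' (A *ᵥ x)
  calc pNormE s (A *ᵥ x) ≤ (A *ᵥ x) ⬝ᵥ v := hle
    _ = x ⬝ᵥ (A *ᵥ v) := hA.mulVec_dotProduct x v
    _ ≤ pNormE 2 x * pNormE 2 (A *ᵥ v) := dotProduct_le_pNormE_mul_pNormE 2 2 _ _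
    _ ≤ pNormE 2 x * (√(opNormE s' s (A ^ 2)) * pNormE s' v) := by
      gcongr
      exacts [pNormE_nonneg _ _, hA.pNormE_two_mulVec_le v]
    _ ≤ pNormE 2 x * (√(opNormE s' s (A ^ 2)) * 1) := by
      gcongr
      exact pNormE_nonneg _ _
    _ = √(opNormE s' s (A ^ 2)) * pNormE 2 x := by ring

lemma pNormE_mulVec_le_of_nonneg (hA : A.IsSymm) (hnn : ∀ i j, 0 ≤ A i j) (hs' : s' ≠ ⊤)
    {σ σ' : ℝ≥0∞} [σ.HolderConjugate σ'] (hσ' : 1 / σ' = 1 / 2 * (1 / s') + 1 / 2 * (1 / 2))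
    (x : ι → ℝ) : pNormE σ (A *ᵥ x) ≤ √(opNormE s' s (A ^ 2)) * pNormE σ' x := by
  set N := opNormE s' s (A ^ 2)
  have h₀ (f g : ι → ℝ) (_ : 0 ≤ f) (_ : 0 ≤ g) :
      g ⬝ᵥ (A *ᵥ f) ≤ √N * (pNormE s' f * pNormE 2 g) := calc
    g ⬝ᵥ (A *ᵥ f) ≤ pNormE 2 (A *ᵥ f) * pNormE 2 g := by
      rw [dotProduct_comm]
      exact dotProduct_le_pNormE_mul_pNormE 2 2 _ _
    _ ≤ √N * pNormE s' f * pNormE 2 g := by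
      gcongr
      exacts [pNormE_nonneg _ _, hA.pNormE_two_mulVec_le f]
    _ = √N * (pNormE s' f * pNormE 2 g) := mul_assoc _ _ _
  have h₁ (f g : ι → ℝ) (_ : 0 ≤ f) (_ : 0 ≤ g) :
      g ⬝ᵥ (A *ᵥ f) ≤ √N * (pNormE 2 f * pNormE s' g) := calc
    g ⬝ᵥ (A *ᵥ f) ≤ pNormE s (A *ᵥ f) * pNormE s' g := by
      rw [dotProduct_comm]
      exact dotProduct_le_pNormE_mul_pNormE s s' _ _
    _ ≤ √N * pNormE 2 f * pNormE s' g := by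
      gcongr
      exacts [pNormE_nonneg _ _, hA.pNormE_mulVec_le_mul_pNormE_two f]
    _ = √N * (pNormE 2 f * pNormE s' g) := mul_assoc _ _ _
  have hs'₀ := ENNReal.HolderConjugate.ne_zero s' s
  obtain ⟨y, hy, hle⟩ := exists_pNormE_le_one_and_pNormE_le_dotProduct σ σ' (A *ᵥ x)
  calc pNormE σ (A *ᵥ x) ≤ (A *ᵥ x) ⬝ᵥ y := hle
    _ ≤ |y| ⬝ᵥ (A *ᵥ |x|) := by
      rw [dotProduct_comm]
      exact dotProduct_mulVec_le_abs hnn x y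
    _ ≤ √√N * √√N * (pNormE σ' |x| * pNormE σ' |y|) :=
      dotProduct_mulVec_le_of_interpolation hnn hs'₀ hs' two_ne_zero ENNReal.ofNat_ne_top
        two_ne_zero ENNReal.ofNat_ne_top hs'₀ hs' hσ' (by rw [hσ', add_comm]) h₀ h₁
        (abs_nonneg x) (abs_nonneg y)
    _ = √N * (pNormE σ' x * pNormE σ' y) := by
      rw [Real.mul_self_sqrt (Real.sqrt_nonneg _), pNormE_abs, pNormE_abs]
    _ ≤ √N * (pNormE σ' x * 1) := by
      gcongr
      · exact pNormE_nonneg _ _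
    _ = √N * pNormE σ' x := by rw [mul_one]

end Matrix.IsSymm

theorem stmt4_general (n : ℕ) (A : Matrix (Fin n) (Fin n) ℝ) (hsymm : A.IsSymm)
    (hnn : ∀ i j, 0 ≤ A i j) (s s' : ℝ≥0∞) (hs : 2 ≤ s)
    (hconj : 1 / s + 1 / s' = 1) (σ σ' : ℝ≥0∞)
    (hσ : 1 / σ = 1 / 2 * (1 / 2) + 1 / 2 * (1 / s))
    (hσ' : 1 / σ' = 1 / 2 * (1 / s') + 1 / 2 * (1 / 2)) :
    opNormE s' 2 A ≤ Real.sqrt (opNormE s' s (A ^ 2)) ∧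
      opNormE 2 s A ≤ Real.sqrt (opNormE s' s (A ^ 2)) ∧
      opNormE σ' σ A ^ 2 ≤ opNormE s' s (A ^ 2) := by
  have : s.HolderConjugate s' :=
    ENNReal.holderConjugate_iff.mpr (by simpa only [one_div] using hconj)
  have : σ.HolderConjugate σ' :=
    .of_one_div_eq_midpoint (q₀ := 2) (q₁ := s') hσ (by rw [hσ', add_comm])
  have hs' : s' ≠ ⊤ := fun h => by
    have := (ENNReal.HolderConjugate.eq_top_iff_eq_one s' s).mp h
    norm_num [this] at hs
  have hN := opNormE_nonneg (p := s') (r := s) (A ^ 2)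
  refine ⟨opNormE_le_of_forall A (ENNReal.HolderConjugate.one_le s' s) (Real.sqrt_nonneg _)
      hsymm.pNormE_two_mulVec_le,
    opNormE_le_of_forall A one_le_two (Real.sqrt_nonneg _) hsymm.pNormE_mulVec_le_mul_pNormE_two,
    ?_⟩
  calc opNormE σ' σ A ^ 2 ≤ √(opNormE s' s (A ^ 2)) ^ 2 := by
        gcongr
        · exact opNormE_nonneg A
        · exact opNormE_le_of_forall A (ENNReal.HolderConjugate.one_le σ' σ) (Real.sqrt_nonneg _)
            (hsymm.pNormE_mulVec_le_of_nonneg hnn hs' hσ')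
    _ = opNormE s' s (A ^ 2) := Real.sq_sqrt hN

/-- Let A be a symmetric nonnegative real n×n matrix and s, s' ∈ [1,∞] with
1/s + 1/s' = 1 and s ≥ 2. If N = ‖A²‖_{s'→s}, then ‖A‖_{s'→2} ≤ N^{1/2} and
‖A‖_{2→s} ≤ N^{1/2}; consequently, with 1/σ = (1/2)(1/2) + (1/2)(1/s) and
1/σ' = (1/2)(1/s') + (1/2)(1/2), one has ‖A‖_{σ'→σ}² ≤ ‖A²‖_{s'→s}. -/
theorem stmt4 (n : ℕ) (A : Matrix (Fin n) (Fin n) ℝ) (hsymm : A.IsSymm)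
    (hnn : ∀ i j, 0 ≤ A i j) (s s' : ℝ≥0∞) (hs : 2 ≤ s) (hs' : 1 ≤ s')
    (hconj : 1 / s + 1 / s' = 1) (σ σ' : ℝ≥0∞)
    (hσ : 1 / σ = 1 / 2 * (1 / 2) + 1 / 2 * (1 / s))
    (hσ' : 1 / σ' = 1 / 2 * (1 / s') + 1 / 2 * (1 / 2)) :
    opNormE s' 2 A ≤ Real.sqrt (opNormE s' s (A ^ 2)) ∧
      opNormE 2 s A ≤ Real.sqrt (opNormE s' s (A ^ 2)) ∧
      opNormE σ' σ A ^ 2 ≤ opNormE s' s (A ^ 2) :=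
  stmt4_general n A hsymm hnn s s' hs hconj σ σ' hσ hσ'
end

section
/- Let H be a graph with vertex partition V(H) = U ⊔ W, let M be the U×W biadjacency matrix with ρ = ‖M‖, and write λ = λ(H), λ_U = λ(H[U]), λ_W = λ(H[W]). Then (λ − λ_U)(λ − λ_W) ≤ ρ² ≤ e_H(U,W). -/
open scoped Classical BigOperators

/-- Adjacency matrix of the induced subgraph on a vertex subset. -/
noncomputable def inducedMat {n : ℕ} (G : SimpleGraph (Fin n)) (U : Finset (Fin n)) :
    Matrix {x // x ∈ U} {x // x ∈ U} ℝ :=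
  fun i j => adjMat G i.1 j.1

/-- Biadjacency matrix of the cut between U and its complement. -/
noncomputable def cutMat {n : ℕ} (G : SimpleGraph (Fin n)) (U : Finset (Fin n)) :
    Matrix {x // x ∈ U} {x // x ∈ Uᶜ} ℝ :=
  fun i j => adjMat G i.1 j.1

/-!
Take an eigenvector `x = (u, v)` of `A` for `λ = specRad A`, split along `U ⊔ W`. Pairing the
block equations `A_U u + M v = λ u` and `A_W v + Mᵀ u = λ v` with `u` and `v` and bounding the
Rayleigh quotients of `A_U`, `A_W` by their spectral radii gives
`(λ - λ_U) ‖u‖² ≤ ⟪u, M v⟫` and `(λ - λ_W) ‖v‖² ≤ ⟪u, M v⟫`, while Cauchy–Schwarz gives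
`⟪u, M v⟫ ≤ ‖M‖ ‖u‖ ‖v‖`. Both factors `λ - λ_U`, `λ - λ_W` are nonnegative (test the Rayleigh
quotient of `A` on the extension of an eigenvector of `A_U` by zero), so multiplying the two
bounds proves the first inequality. The second is `‖M‖ ≤ ‖M‖_F`, by Cauchy–Schwarz row by row.
-/

open Matrix Finset

section DotProduct

variable {ι : Type*} [Fintype ι]

lemma dotProduct_self_nonneg (x : ι → ℝ) : 0 ≤ x ⬝ᵥ x := by
  simpa using dotProduct_self_star_nonneg x

lemma dotProduct_self_pos {x : ι → ℝ} (hx : x ≠ 0) : 0 < x ⬝ᵥ x := by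
  simpa using dotProduct_star_self_pos_iff.mpr hx

lemma dotProduct_sq_le_mul (x y : ι → ℝ) : (x ⬝ᵥ y) ^ 2 ≤ (x ⬝ᵥ x) * (y ⬝ᵥ y) := by
  simpa only [dotProduct, sq] using sum_mul_sq_le_sq_mul_sq univ x y

end DotProduct

section Blocks

variable {ι m κ R : Type*} [Fintype ι] [DecidableEq ι] [NonUnitalNonAssocSemiring R]

lemma dotProduct_eq_add_compl (s : Finset ι) (x y : ι → R) :
    x ⬝ᵥ y = (fun i : s => x i) ⬝ᵥ (fun i : s => y i)
      + (fun i : ↥sᶜ => x i) ⬝ᵥ (fun i : ↥sᶜ => y i) := by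
  simp only [dotProduct, sum_coe_sort s (fun i => x i * y i),
    sum_coe_sort sᶜ (fun i => x i * y i), sum_add_sum_compl]

lemma mulVec_comp_eq_add_compl (A : Matrix m ι R) (r : κ → m) (s : Finset ι) (x : ι → R) :
    (fun k => (A *ᵥ x) (r k))
      = A.submatrix r (↑) *ᵥ (fun i : s => x i) + A.submatrix r (↑) *ᵥ (fun i : ↥sᶜ => x i) := by
  funext k
  simp only [Pi.add_apply, mulVec, dotProduct, submatrix_apply,
    sum_coe_sort s (fun i => A (r k) i * x i), sum_coe_sort sᶜ (fun i => A (r k) i * x i),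
    sum_add_sum_compl]

end Blocks

section SpectralRadius

variable {ι : Type*} [Fintype ι] {A : Matrix ι ι ℝ}

open scoped MatrixOrder in
lemma Matrix.IsHermitian.dotProduct_mulVec_le (hA : A.IsHermitian) {c : ℝ}
    (hc : ∀ i, hA.eigenvalues i ≤ c) (x : ι → ℝ) : x ⬝ᵥ A *ᵥ x ≤ c * (x ⬝ᵥ x) := by
  classical
  have hle : A ≤ algebraMap ℝ _ c := le_algebraMap_of_spectrum_le (ha := hA.isSelfAdjoint)
    fun μ hμ => by
      obtain ⟨i, rfl⟩ := hA.spectrum_real_eq_range_eigenvalues ▸ hμ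
      exact hc i
  have := (Matrix.le_iff.mp hle).dotProduct_mulVec_nonneg x
  rwa [Algebra.algebraMap_eq_smul_one, sub_mulVec, smul_mulVec, one_mulVec, star_trivial,
    dotProduct_sub, dotProduct_smul, smul_eq_mul, sub_nonneg] at this

lemma Matrix.IsHermitian.isGreatest_sup'_eigenvalues [Nonempty ι] (hA : A.IsHermitian) :
    IsGreatest {μ : ℝ | ∃ x : ι → ℝ, x ≠ 0 ∧ A *ᵥ x = μ • x}
      (univ.sup' univ_nonempty hA.eigenvalues) := by
  have hc : ∀ i, hA.eigenvalues i ≤ univ.sup' univ_nonempty hA.eigenvalues :=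
    fun i => le_sup' _ (mem_univ i)
  refine ⟨?_, ?_⟩
  · obtain ⟨j, -, hj⟩ := exists_mem_eq_sup' univ_nonempty hA.eigenvalues
    exact ⟨hA.eigenvectorBasis j, by simpa using hA.eigenvectorBasis.orthonormal.ne_zero j,
      hj ▸ hA.mulVec_eigenvectorBasis j⟩
  · rintro μ ⟨x, hx, hAx⟩
    have := hA.dotProduct_mulVec_le hc x
    rw [hAx, dotProduct_smul, smul_eq_mul] at this
    exact le_of_mul_le_mul_right this (dotProduct_self_pos hx)

lemma specRad_of_isEmpty [IsEmpty ι] (A : Matrix ι ι ℝ) : specRad A = 0 := by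
  simp [specRad, Subsingleton.elim _ (0 : ι → ℝ)]

lemma Matrix.IsHermitian.exists_mulVec_eq_specRad_smul [Nonempty ι] (hA : A.IsHermitian) :
    ∃ x : ι → ℝ, x ≠ 0 ∧ A *ᵥ x = specRad A • x := by
  rw [specRad, hA.isGreatest_sup'_eigenvalues.csSup_eq]
  exact hA.isGreatest_sup'_eigenvalues.1

lemma Matrix.IsHermitian.dotProduct_mulVec_le_specRad (hA : A.IsHermitian) (x : ι → ℝ) :
    x ⬝ᵥ A *ᵥ x ≤ specRad A * (x ⬝ᵥ x) := by
  cases isEmpty_or_nonempty ι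
  · simp [dotProduct]
  · rw [specRad, hA.isGreatest_sup'_eigenvalues.csSup_eq]
    exact hA.dotProduct_mulVec_le (fun i => le_sup' _ (mem_univ i)) x

lemma Matrix.IsHermitian.specRad_nonneg (hA : A.IsHermitian) (hdiag : ∀ i, 0 ≤ A i i) :
    0 ≤ specRad A := by
  cases isEmpty_or_nonempty ι with
  | inl _ => exact (specRad_of_isEmpty A).ge
  | inr h =>
    classical
    obtain ⟨i⟩ := h
    refine (hdiag i).trans ?_
    simpa [mulVec_single_one] using hA.dotProduct_mulVec_le_specRad (Pi.single i 1)

lemma Matrix.IsHermitian.sub_specRad_mul_dotProduct_self_le (hA : A.IsHermitian) {μ : ℝ}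
    {u w : ι → ℝ} (h : A *ᵥ u + w = μ • u) : (μ - specRad A) * (u ⬝ᵥ u) ≤ u ⬝ᵥ w := by
  have h' := congrArg (u ⬝ᵥ ·) h
  simp only [dotProduct_add, dotProduct_smul, smul_eq_mul] at h'
  linarith [hA.dotProduct_mulVec_le_specRad u]

lemma Matrix.IsHermitian.specRad_submatrix_le [DecidableEq ι] (hA : A.IsHermitian)
    (hdiag : ∀ i, 0 ≤ A i i) (s : Finset ι) :
    specRad (A.submatrix (↑) (↑) : Matrix s s ℝ) ≤ specRad A := by
  cases isEmpty_or_nonempty s with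
  | inl _ => exact (specRad_of_isEmpty _).trans_le (hA.specRad_nonneg hdiag)
  | inr _ =>
    obtain ⟨y, hy, hAy⟩ := (hA.submatrix ((↑) : s → ι)).exists_mulVec_eq_specRad_smul
    let z : ι → ℝ := fun i => if h : i ∈ s then y ⟨i, h⟩ else 0
    have hzs : (fun i : s => z i) = y := funext fun i => dif_pos i.2
    have hzsc : (fun i : ↥sᶜ => z i) = 0 := funext fun i => dif_neg (mem_compl.mp i.2)
    have hzz : z ⬝ᵥ z = y ⬝ᵥ y := by
      rw [dotProduct_eq_add_compl s, hzs, hzsc, zero_dotProduct, add_zero]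
    have hzAz : z ⬝ᵥ A *ᵥ z = specRad (A.submatrix (↑) (↑) : Matrix s s ℝ) * (y ⬝ᵥ y) := by
      rw [dotProduct_eq_add_compl s, mulVec_comp_eq_add_compl A (Subtype.val : s → ι) s z, hzs,
        hzsc, zero_dotProduct, add_zero, mulVec_zero, add_zero, hAy, dotProduct_smul, smul_eq_mul]
    have := hA.dotProduct_mulVec_le_specRad z
    rw [hzAz, hzz] at this
    exact le_of_mul_le_mul_right this (dotProduct_self_pos hy)

end SpectralRadius

section OperatorNorm

variable {α β : Type*} [Fintype α] [Fintype β]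

lemma pNorm_two_eq_sqrt (x : α → ℝ) : pNorm 2 x = √(x ⬝ᵥ x) := by
  rw [pNorm, ← Real.sqrt_eq_rpow]
  congr 1
  refine sum_congr rfl fun i _ => ?_
  rw [Real.rpow_two, sq_abs, sq]

lemma dotProduct_mulVec_self_le_sum_sq (M : Matrix β α ℝ) (x : α → ℝ) :
    M *ᵥ x ⬝ᵥ M *ᵥ x ≤ (∑ i, ∑ j, M i j ^ 2) * (x ⬝ᵥ x) := by
  rw [sum_mul]
  refine sum_le_sum fun i _ => ?_
  simpa only [mulVec, dotProduct, sq] using dotProduct_sq_le_mul (M i) x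

lemma pNorm_two_mulVec_div_le (M : Matrix β α ℝ) (x : α → ℝ) :
    pNorm 2 (M *ᵥ x) / pNorm 2 x ≤ √(∑ i, ∑ j, M i j ^ 2) := by
  rw [pNorm_two_eq_sqrt, pNorm_two_eq_sqrt]
  refine div_le_of_le_mul₀ (Real.sqrt_nonneg _) (Real.sqrt_nonneg _) ?_
  rw [← Real.sqrt_mul (x := ∑ i, ∑ j, M i j ^ 2) (by positivity)]
  exact Real.sqrt_le_sqrt (dotProduct_mulVec_self_le_sum_sq M x)

lemma opNorm_two_nonneg (M : Matrix β α ℝ) : 0 ≤ opNorm 2 2 M := by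
  refine Real.sSup_nonneg fun c ⟨x, _, hc⟩ => hc ▸ ?_
  rw [pNorm_two_eq_sqrt, pNorm_two_eq_sqrt]
  positivity

lemma opNorm_two_sq_le_sum_sq (M : Matrix β α ℝ) : opNorm 2 2 M ^ 2 ≤ ∑ i, ∑ j, M i j ^ 2 := by
  have h : opNorm 2 2 M ≤ √(∑ i, ∑ j, M i j ^ 2) :=
    Real.sSup_le (fun c ⟨x, _, hc⟩ => hc ▸ pNorm_two_mulVec_div_le M x) (Real.sqrt_nonneg _)
  calc opNorm 2 2 M ^ 2 ≤ √(∑ i, ∑ j, M i j ^ 2) ^ 2 := pow_le_pow_left₀ (opNorm_two_nonneg M) h 2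
    _ = ∑ i, ∑ j, M i j ^ 2 := Real.sq_sqrt (by positivity)

lemma dotProduct_mulVec_self_le_opNorm_two_sq (M : Matrix β α ℝ) (x : α → ℝ) :
    M *ᵥ x ⬝ᵥ M *ᵥ x ≤ opNorm 2 2 M ^ 2 * (x ⬝ᵥ x) := by
  rcases eq_or_ne x 0 with rfl | hx
  · simp
  have hratio : pNorm 2 (M *ᵥ x) / pNorm 2 x ≤ opNorm 2 2 M :=
    le_csSup ⟨_, fun c ⟨y, _, hc⟩ => hc ▸ pNorm_two_mulVec_div_le M y⟩ ⟨x, hx, rfl⟩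
  rw [pNorm_two_eq_sqrt, pNorm_two_eq_sqrt,
    div_le_iff₀ (Real.sqrt_pos.mpr (dotProduct_self_pos hx))] at hratio
  calc M *ᵥ x ⬝ᵥ M *ᵥ x = √(M *ᵥ x ⬝ᵥ M *ᵥ x) ^ 2 := (Real.sq_sqrt (dotProduct_self_nonneg _)).symm
    _ ≤ (opNorm 2 2 M * √(x ⬝ᵥ x)) ^ 2 := pow_le_pow_left₀ (Real.sqrt_nonneg _) hratio 2
    _ = opNorm 2 2 M ^ 2 * (x ⬝ᵥ x) := by rw [mul_pow, Real.sq_sqrt (dotProduct_self_nonneg x)]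

end OperatorNorm

lemma mul_le_sq_of_mul_le_of_mul_le {p q a b c ρ : ℝ} (hp : 0 ≤ p) (hq : 0 ≤ q) (ha : 0 ≤ a)
    (hb : 0 ≤ b) (hab : 0 < a + b) (hpa : p * a ≤ c) (hqb : q * b ≤ c)
    (hc : c ^ 2 ≤ ρ ^ 2 * (a * b)) : p * q ≤ ρ ^ 2 := by
  have hc0 : 0 ≤ c := (mul_nonneg hp ha).trans hpa
  rcases ha.eq_or_lt with rfl | ha'
  · have hc' : c = 0 := by nlinarith
    have hq0 : q = 0 := by nlinarith
    simpa [hq0] using sq_nonneg ρ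
  rcases hb.eq_or_lt with rfl | hb'
  · have hc' : c = 0 := by nlinarith
    have hp0 : p = 0 := by nlinarith
    simpa [hp0] using sq_nonneg ρ
  refine le_of_mul_le_mul_right ?_ (mul_pos ha' hb')
  calc p * q * (a * b) = (p * a) * (q * b) := by ring
    _ ≤ c * c := mul_le_mul hpa hqb (mul_nonneg hq hb) hc0
    _ ≤ ρ ^ 2 * (a * b) := by nlinarith

theorem Matrix.IsHermitian.sub_specRad_mul_sub_specRad_le_opNorm_two_sq {ι : Type*} [Fintype ι]
    [DecidableEq ι] {A : Matrix ι ι ℝ} (hA : A.IsHermitian) (hdiag : ∀ i, 0 ≤ A i i)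
    (s : Finset ι) :
    (specRad A - specRad (A.submatrix (↑) (↑) : Matrix s s ℝ))
        * (specRad A - specRad (A.submatrix (↑) (↑) : Matrix ↥sᶜ ↥sᶜ ℝ))
      ≤ opNorm 2 2 (A.submatrix (↑) (↑) : Matrix s ↥sᶜ ℝ) ^ 2 := by
  cases isEmpty_or_nonempty ι
  · simpa [specRad_of_isEmpty] using sq_nonneg _
  obtain ⟨x, hx, hAx⟩ := hA.exists_mulVec_eq_specRad_smul
  set u : s → ℝ := fun i => x i
  set v : ↥sᶜ → ℝ := fun i => x i
  set M : Matrix s ↥sᶜ ℝ := A.submatrix (↑) (↑)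
  have hu : A.submatrix (↑) (↑) *ᵥ u + M *ᵥ v = specRad A • u := by
    rw [← mulVec_comp_eq_add_compl A (Subtype.val : s → ι) s x, hAx]
    rfl
  have hv : A.submatrix (↑) (↑) *ᵥ v + Mᵀ *ᵥ u = specRad A • v := by
    rw [transpose_submatrix, (isHermitian_iff_isSymm.mp hA).eq, add_comm,
      ← mulVec_comp_eq_add_compl A (Subtype.val : ↥sᶜ → ι) s x, hAx]
    rfl
  have hu' := (hA.submatrix _).sub_specRad_mul_dotProduct_self_le hu
  have hv' := dotProduct_transpose_mulVec M v u ▸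
    (hA.submatrix _).sub_specRad_mul_dotProduct_self_le hv
  have hcs : (u ⬝ᵥ M *ᵥ v) ^ 2 ≤ opNorm 2 2 M ^ 2 * ((u ⬝ᵥ u) * (v ⬝ᵥ v)) :=
    calc (u ⬝ᵥ M *ᵥ v) ^ 2 ≤ (u ⬝ᵥ u) * (M *ᵥ v ⬝ᵥ M *ᵥ v) := dotProduct_sq_le_mul u _
      _ ≤ (u ⬝ᵥ u) * (opNorm 2 2 M ^ 2 * (v ⬝ᵥ v)) :=
        mul_le_mul_of_nonneg_left (dotProduct_mulVec_self_le_opNorm_two_sq M v)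
          (dotProduct_self_nonneg u)
      _ = opNorm 2 2 M ^ 2 * ((u ⬝ᵥ u) * (v ⬝ᵥ v)) := by ring
  have hx' : 0 < u ⬝ᵥ u + v ⬝ᵥ v := dotProduct_eq_add_compl s x x ▸ dotProduct_self_pos hx
  exact mul_le_sq_of_mul_le_of_mul_le (sub_nonneg.mpr (hA.specRad_submatrix_le hdiag s))
    (sub_nonneg.mpr (hA.specRad_submatrix_le hdiag sᶜ)) (dotProduct_self_nonneg u)
    (dotProduct_self_nonneg v) hx' hu' hv' hcs

/-- Spectral cut bound (b): (λ − λ_U)(λ − λ_W) ≤ ‖M‖² ≤ e_H(U,W), where W = Uᶜ. -/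
theorem stmt8 (n : ℕ) (G : SimpleGraph (Fin n)) (U : Finset (Fin n)) :
    (specRad (adjMat G) - specRad (inducedMat G U))
          * (specRad (adjMat G) - specRad (inducedMat G Uᶜ))
        ≤ opNorm 2 2 (cutMat G U) ^ 2 ∧
      opNorm 2 2 (cutMat G U) ^ 2
        ≤ ∑ u ∈ U, ∑ w ∈ Uᶜ, if G.Adj u w then (1 : ℝ) else 0 := by
  have hA : (adjMat G).IsHermitian :=
    isHermitian_iff_isSymm.mpr (G.isSymm_adjMatrix (α := ℝ))
  have hdiag : ∀ i, 0 ≤ adjMat G i i := fun i => by simp [adjMat]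
  refine ⟨hA.sub_specRad_mul_sub_specRad_le_opNorm_two_sq hdiag U,
    (opNorm_two_sq_le_sum_sq _).trans_eq ?_⟩
  rw [← sum_coe_sort U]
  refine sum_congr rfl fun i _ => ?_
  rw [← sum_coe_sort Uᶜ]
  exact sum_congr rfl fun j _ => by simp [cutMat, adjMat]
end

section
/- Fix k ≥ 2 and m with m − 1 ≥ C(k,2). Let F be a split graph consisting of a clique C of size k, an independent set I, with every I-vertex adjacent only to clique vertices, and with m − 1 − C(k,2) ≤ m cut edges. Then λ(F) ≤ (k − 1 + √((k−1)² + 4m))/2 ≤ √m + k − 1. -/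
open scoped Classical BigOperators

/-- Crude spectral bound for split graphs: if F consists of a clique C of size k ≥ 2,
an independent complement whose vertices are adjacent only to clique vertices,
with m − 1 ≥ C(k,2) and at most m cut edges, then
λ(F) ≤ (k − 1 + √((k−1)² + 4m))/2 ≤ √m + k − 1. -/
theorem stmt13 (n k m : ℕ) (hk : 2 ≤ k) (hm : k.choose 2 + 1 ≤ m)
    (G : SimpleGraph (Fin n)) (C : Finset (Fin n)) (hCcard : C.card = k)
    (hclique : ∀ u ∈ C, ∀ v ∈ C, u ≠ v → G.Adj u v)
    (hindep : ∀ u ∈ Cᶜ, ∀ v ∈ Cᶜ, ¬ G.Adj u v)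
    (hcut : (∑ u ∈ C, ∑ w ∈ Cᶜ, if G.Adj u w then (1 : ℕ) else 0) ≤ m) :
    specRad (adjMat G)
        ≤ ((k : ℝ) - 1 + Real.sqrt (((k : ℝ) - 1) ^ 2 + 4 * (m : ℝ))) / 2 ∧
      ((k : ℝ) - 1 + Real.sqrt (((k : ℝ) - 1) ^ 2 + 4 * (m : ℝ))) / 2
        ≤ Real.sqrt m + (k : ℝ) - 1 := by
  have hk1 : (1:ℝ) ≤ (k:ℝ) - 1 := by
    have : (2:ℝ) ≤ (k:ℝ) := by exact_mod_cast hk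
    linarith
  set c : ℝ := (k:ℝ) - 1 with hc
  have hc0 : (0:ℝ) ≤ c := by linarith
  have hm0 : (0:ℝ) ≤ (m:ℝ) := Nat.cast_nonneg m
  set s : ℝ := Real.sqrt (c^2 + 4*(m:ℝ)) with hsdef
  have hs0 : 0 ≤ s := Real.sqrt_nonneg _
  have hssq : s^2 = c^2 + 4*(m:ℝ) := Real.sq_sqrt (by positivity)
  have hsc : c ≤ s := by
    have h := Real.sqrt_le_sqrt (show c^2 ≤ c^2 + 4*(m:ℝ) by linarith)
    rwa [Real.sqrt_sq hc0] at h
  set t : ℝ := Real.sqrt (m:ℝ) with htdef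
  have ht0 : 0 ≤ t := Real.sqrt_nonneg _
  have htsq : t^2 = (m:ℝ) := Real.sq_sqrt hm0
  constructor
  · -- main spectral bound
    apply Real.sSup_le
    · rintro μ ⟨x, hx0, hxe⟩
      have hAnn : ∀ i j, (0:ℝ) ≤ adjMat G i j := by
        intro i j; by_cases h : G.Adj i j <;> simp [adjMat, h]
      have hA1 : ∀ i j, adjMat G i j ≤ 1 := by
        intro i j; by_cases h : G.Adj i j <;> simp [adjMat, h]
      have hAsymm : ∀ i j, adjMat G i j = adjMat G j i := by
        intro i j; simp [adjMat, G.adj_comm]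
      have hAdiag : ∀ i, adjMat G i i = 0 := by
        intro i; simp [adjMat]
      set y : Fin n → ℝ := fun i => |x i| with hy
      have hy0 : ∀ i, 0 ≤ y i := fun i => abs_nonneg _
      have ha2nn : (0:ℝ) ≤ ∑ i ∈ C, y i ^ 2 := Finset.sum_nonneg fun i _ => sq_nonneg _
      have hb2nn : (0:ℝ) ≤ ∑ i ∈ Cᶜ, y i ^ 2 := Finset.sum_nonneg fun i _ => sq_nonneg _
      set α : ℝ := Real.sqrt (∑ i ∈ C, y i ^ 2) with hα
      set β : ℝ := Real.sqrt (∑ i ∈ Cᶜ, y i ^ 2) with hβ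
      have hαsq : α^2 = ∑ i ∈ C, y i ^ 2 := Real.sq_sqrt ha2nn
      have hβsq : β^2 = ∑ i ∈ Cᶜ, y i ^ 2 := Real.sq_sqrt hb2nn
      have hα0 : 0 ≤ α := Real.sqrt_nonneg _
      have hβ0 : 0 ≤ β := Real.sqrt_nonneg _
      -- norm N
      have hN : ∑ i, x i ^ 2 = α^2 + β^2 := by
        rw [hαsq, hβsq, Finset.sum_add_sum_compl C (fun i => y i ^ 2)]
        exact Finset.sum_congr rfl fun i _ => by rw [hy]; simp [sq_abs]
      have hNpos : (0:ℝ) < α^2 + β^2 := by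
        obtain ⟨i, hi⟩ := Function.ne_iff.mp hx0
        have h1 : x i ^ 2 ≤ ∑ j, x j ^ 2 :=
          Finset.single_le_sum (f := fun j => x j ^ 2) (fun j _ => sq_nonneg _)
            (Finset.mem_univ i)
        have h2 : 0 < x i ^ 2 :=
          lt_of_le_of_ne (sq_nonneg _) (Ne.symm (pow_ne_zero 2 hi))
        rw [← hN]; linarith
      -- Rayleigh identity
      have hray : μ * (α^2 + β^2) = ∑ i, ∑ j, adjMat G i j * x i * x j := by
        have h1 : ∑ i, x i * ((adjMat G).mulVec x) i = μ * (α^2 + β^2) := by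
          rw [hxe, ← hN]
          simp only [Pi.smul_apply, smul_eq_mul, Finset.mul_sum]
          exact Finset.sum_congr rfl fun i _ => by ring
        rw [← h1]
        simp only [Matrix.mulVec, dotProduct, Finset.mul_sum]
        exact Finset.sum_congr rfl fun i _ => Finset.sum_congr rfl fun j _ => by ring
      -- bound by absolute values
      have habs : ∑ i, ∑ j, adjMat G i j * x i * x j
          ≤ ∑ i, ∑ j, adjMat G i j * y i * y j := by
        apply Finset.sum_le_sum; intro i _
        apply Finset.sum_le_sum; intro j _
        have hxy : x i * x j ≤ y i * y j := by
          rw [hy]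
          calc x i * x j ≤ |x i * x j| := le_abs_self _
            _ = |x i| * |x j| := abs_mul _ _
        calc adjMat G i j * x i * x j = adjMat G i j * (x i * x j) := by ring
          _ ≤ adjMat G i j * (y i * y j) := mul_le_mul_of_nonneg_left hxy (hAnn i j)
          _ = adjMat G i j * y i * y j := by ring
      -- split into pieces
      have h4 : ∑ i ∈ Cᶜ, ∑ j ∈ Cᶜ, adjMat G i j * y i * y j = 0 := by
        apply Finset.sum_eq_zero; intro i hi
        apply Finset.sum_eq_zero; intro j hj
        have : adjMat G i j = 0 := by simp [adjMat, hindep i hi j hj]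
        rw [this]; ring
      have h3 : ∑ i ∈ Cᶜ, ∑ j ∈ C, adjMat G i j * y i * y j
          = ∑ i ∈ C, ∑ j ∈ Cᶜ, adjMat G i j * y i * y j := by
        rw [Finset.sum_comm]
        exact Finset.sum_congr rfl fun i _ => Finset.sum_congr rfl fun j _ => by
          rw [hAsymm]; ring
      have hsplit : ∑ i, ∑ j, adjMat G i j * y i * y j
          = (∑ i ∈ C, ∑ j ∈ C, adjMat G i j * y i * y j)
            + 2 * (∑ i ∈ C, ∑ j ∈ Cᶜ, adjMat G i j * y i * y j) := by
        have hrow : ∀ D : Finset (Fin n),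
            ∑ i ∈ D, ∑ j, adjMat G i j * y i * y j
              = ∑ i ∈ D, ∑ j ∈ C, adjMat G i j * y i * y j
                + ∑ i ∈ D, ∑ j ∈ Cᶜ, adjMat G i j * y i * y j := by
          intro D
          rw [← Finset.sum_add_distrib]
          exact Finset.sum_congr rfl fun i _ =>
            (Finset.sum_add_sum_compl C (fun j => adjMat G i j * y i * y j)).symm
        rw [← Finset.sum_add_sum_compl C (fun i => ∑ j, adjMat G i j * y i * y j),
          hrow C, hrow Cᶜ, h3, h4]
        ring
      -- bound S1
      have hS1le : ∑ i ∈ C, ∑ j ∈ C, adjMat G i j * y i * y j ≤ c * α^2 := by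
        have hterm : ∀ i ∈ C, ∑ j ∈ C, adjMat G i j * y i * y j
            ≤ (∑ j ∈ C, y i * y j) - y i ^ 2 := by
          intro i hi
          have h1 : ∑ j ∈ C, adjMat G i j * y i * y j
              = ∑ j ∈ C.erase i, adjMat G i j * y i * y j := by
            rw [← Finset.add_sum_erase C (fun j => adjMat G i j * y i * y j) hi,
              hAdiag, zero_mul, zero_mul, zero_add]
          have h2 : ∑ j ∈ C.erase i, adjMat G i j * y i * y j
              ≤ ∑ j ∈ C.erase i, y i * y j := by
            apply Finset.sum_le_sum; intro j hj
            calc adjMat G i j * y i * y j = adjMat G i j * (y i * y j) := by ring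
              _ ≤ 1 * (y i * y j) :=
                  mul_le_mul_of_nonneg_right (hA1 i j) (mul_nonneg (hy0 i) (hy0 j))
              _ = y i * y j := one_mul _
          have h3' : ∑ j ∈ C.erase i, y i * y j = (∑ j ∈ C, y i * y j) - y i ^ 2 := by
            rw [← Finset.add_sum_erase C (fun j => y i * y j) hi]; ring
          linarith
        have hstep : ∑ i ∈ C, ∑ j ∈ C, adjMat G i j * y i * y j
            ≤ (∑ i ∈ C, y i)^2 - α^2 := by
          calc ∑ i ∈ C, ∑ j ∈ C, adjMat G i j * y i * y j
              ≤ ∑ i ∈ C, ((∑ j ∈ C, y i * y j) - y i ^ 2) := Finset.sum_le_sum hterm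
            _ = (∑ i ∈ C, y i)^2 - α^2 := by
                rw [Finset.sum_sub_distrib, hαsq, sq, Finset.sum_mul_sum]
        have hcs : (∑ i ∈ C, y i)^2 ≤ (k:ℝ) * α^2 := by
          have h := Finset.sum_mul_sq_le_sq_mul_sq C (fun _ => (1:ℝ)) y
          simp only [one_pow, one_mul, mul_one, Finset.sum_const, nsmul_eq_mul] at h
          rw [hCcard] at h
          rw [hαsq]
          exact h
        rw [hc]; linarith
      -- bound S2
      have hS2nn : (0:ℝ) ≤ ∑ i ∈ C, ∑ j ∈ Cᶜ, adjMat G i j * y i * y j := by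
        apply Finset.sum_nonneg; intro i _
        apply Finset.sum_nonneg; intro j _
        exact mul_nonneg (mul_nonneg (hAnn i j) (hy0 i)) (hy0 j)
      have hS2le : ∑ i ∈ C, ∑ j ∈ Cᶜ, adjMat G i j * y i * y j ≤ t * (α * β) := by
        have hprod : ∑ i ∈ C, ∑ j ∈ Cᶜ, adjMat G i j * y i * y j
            = ∑ p ∈ C ×ˢ Cᶜ, adjMat G p.1 p.2 * (y p.1 * y p.2) := by
          rw [Finset.sum_product]
          exact Finset.sum_congr rfl fun i _ => Finset.sum_congr rfl fun j _ => by ring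
        have hcs := Finset.sum_mul_sq_le_sq_mul_sq (C ×ˢ Cᶜ)
          (fun p => adjMat G p.1 p.2) (fun p => y p.1 * y p.2)
        have hAsq : ∑ p ∈ C ×ˢ Cᶜ, (adjMat G p.1 p.2)^2 ≤ (m:ℝ) := by
          have heq : ∑ p ∈ C ×ˢ Cᶜ, (adjMat G p.1 p.2)^2
              = ((∑ u ∈ C, ∑ w ∈ Cᶜ, if G.Adj u w then (1:ℕ) else 0 : ℕ) : ℝ) := by
            rw [Finset.sum_product]
            push_cast
            apply Finset.sum_congr rfl; intro i _
            apply Finset.sum_congr rfl; intro j _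
            by_cases h : G.Adj i j <;> simp [adjMat, h]
          rw [heq]; exact_mod_cast hcut
        have hgsq : ∑ p ∈ C ×ˢ Cᶜ, (y p.1 * y p.2)^2
            = (∑ i ∈ C, y i ^ 2) * (∑ i ∈ Cᶜ, y i ^ 2) := by
          rw [Finset.sum_product, Finset.sum_mul_sum]
          exact Finset.sum_congr rfl fun i _ => Finset.sum_congr rfl fun j _ => by ring
        have hS2sq : (∑ i ∈ C, ∑ j ∈ Cᶜ, adjMat G i j * y i * y j)^2
            ≤ (m:ℝ) * ((∑ i ∈ C, y i ^ 2) * (∑ i ∈ Cᶜ, y i ^ 2)) := by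
          rw [hprod]
          calc (∑ p ∈ C ×ˢ Cᶜ, adjMat G p.1 p.2 * (y p.1 * y p.2))^2
              ≤ (∑ p ∈ C ×ˢ Cᶜ, (adjMat G p.1 p.2)^2)
                * (∑ p ∈ C ×ˢ Cᶜ, (y p.1 * y p.2)^2) := hcs
            _ ≤ (m:ℝ) * ((∑ i ∈ C, y i ^ 2) * (∑ i ∈ Cᶜ, y i ^ 2)) := by
                rw [hgsq]
                exact mul_le_mul_of_nonneg_right hAsq (mul_nonneg ha2nn hb2nn)
        calc ∑ i ∈ C, ∑ j ∈ Cᶜ, adjMat G i j * y i * y j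
            = Real.sqrt ((∑ i ∈ C, ∑ j ∈ Cᶜ, adjMat G i j * y i * y j)^2) :=
              (Real.sqrt_sq hS2nn).symm
          _ ≤ Real.sqrt ((m:ℝ) * ((∑ i ∈ C, y i ^ 2) * (∑ i ∈ Cᶜ, y i ^ 2))) :=
              Real.sqrt_le_sqrt hS2sq
          _ = t * (α * β) := by
              rw [htdef, hα, hβ, ← Real.sqrt_mul ha2nn, ← Real.sqrt_mul hm0]
      -- combine
      have hkey : μ * (α^2 + β^2) ≤ c * α^2 + 2 * (t * (α * β)) := by
        calc μ * (α^2 + β^2) = ∑ i, ∑ j, adjMat G i j * x i * x j := hray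
          _ ≤ ∑ i, ∑ j, adjMat G i j * y i * y j := habs
          _ = (∑ i ∈ C, ∑ j ∈ C, adjMat G i j * y i * y j)
              + 2 * (∑ i ∈ C, ∑ j ∈ Cᶜ, adjMat G i j * y i * y j) := hsplit
          _ ≤ c * α^2 + 2 * (t * (α * β)) := by linarith
      have hscpos : (0:ℝ) < s + c := by linarith
      have hquad : 0 ≤ (s - c) * α^2 - 4 * (t * (α * β)) + (s + c) * β^2 := by
        have hz : s^2 - c^2 - 4*t^2 = 0 := by rw [hssq, htsq]; ring
        have hkey2 : (s + c) * ((s - c) * α^2 - 4 * (t * (α * β)) + (s + c) * β^2)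
            = (2*t*α - (s+c)*β)^2 + (s^2 - c^2 - 4*t^2) * α^2 := by ring
        have h5 : (s + c) * 0 ≤ (s + c)
            * ((s - c) * α^2 - 4 * (t * (α * β)) + (s + c) * β^2) := by
          rw [mul_zero, hkey2, hz, zero_mul, add_zero]
          exact sq_nonneg _
        exact le_of_mul_le_mul_left h5 hscpos
      clear_value c s t α β
      have hfinal : μ * (α^2 + β^2) ≤ (c + s)/2 * (α^2 + β^2) := by
        have hexp : (c + s)/2 * (α^2 + β^2) - (c * α^2 + 2 * (t * (α * β)))
            = ((s - c) * α^2 - 4 * (t * (α * β)) + (s + c) * β^2)/2 := by ring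
        linarith
      exact le_of_mul_le_mul_right (by linarith) hNpos
    · -- 0 ≤ bound
      linarith
  · -- easy half
    have h1 : s ≤ c + 2 * t := by
      have h2 : c^2 + 4*(m:ℝ) ≤ (c + 2*t)^2 := by nlinarith [mul_nonneg hc0 ht0]
      calc s = Real.sqrt (c^2 + 4*(m:ℝ)) := hsdef
        _ ≤ Real.sqrt ((c + 2*t)^2) := Real.sqrt_le_sqrt h2
        _ = c + 2*t := Real.sqrt_sq (by linarith)
    rw [htdef] at h1
    linarith
end

section
/- Let H be a graph with m edges and unit Perron eigenvector x = (x_v). If λ(H)² ≥ (1+δ)m for some 0 < δ ≤ 1/3, then ‖x‖_∞ · m^{1/4} < δ^{−2}. -/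
open scoped Classical BigOperators

set_option maxHeartbeats 1000000 in
/-- Delocalization from a multiplicative spectral gap: if λ(H)² ≥ (1+δ)m for some
0 < δ ≤ 1/3, then ‖x‖_∞ · m^{1/4} < δ^{−4} (in fact < δ^{−2}) for the unit Perron
eigenvector x. -/
theorem stmt16 (n m : ℕ) (G : SimpleGraph (Fin n)) (hm : m = Nat.card G.edgeSet)
    (hm0 : 0 < m) (δ : ℝ) (hδ0 : 0 < δ) (hδ1 : δ ≤ 1 / 3)
    (x : Fin n → ℝ) (hx0 : ∀ v, 0 ≤ x v) (hx1 : ∑ v, x v ^ 2 = 1)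
    (heig : (adjMat G).mulVec x = specRad (adjMat G) • x)
    (hgap : (1 + δ) * (m : ℝ) ≤ specRad (adjMat G) ^ 2) :
    (⨆ v, x v) * (m : ℝ) ^ ((1 : ℝ) / 4) < δ ^ (-2 : ℤ) ∧
      (⨆ v, x v) * (m : ℝ) ^ ((1 : ℝ) / 4) < δ ^ (-4 : ℤ) := by
  classical
  have hne : Nonempty (Fin n) := by
    have h := hm ▸ hm0
    obtain ⟨⟨e, he⟩, -⟩ := Nat.card_pos_iff.mp h
    exact ⟨e.out.1⟩
  set A := adjMat G with hA
  set lam := specRad (adjMat G) with hlam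
  obtain ⟨i, hi⟩ := Finite.exists_max x
  have hsup : (⨆ v, x v) = x i :=
    le_antisymm (ciSup_le hi) (le_ciSup (Set.Finite.bddAbove (Set.finite_range x)) i)
  set M : ℝ := (m : ℝ) ^ ((1 : ℝ) / 4) with hMdef
  have hm0' : (0 : ℝ) < m := by exact_mod_cast hm0
  have hM0 : 0 < M := Real.rpow_pos_of_pos hm0' _
  have hM2 : M * M = Real.sqrt m := by
    rw [hMdef, ← Real.rpow_add hm0', Real.sqrt_eq_rpow]
    norm_num
  have hsqm : Real.sqrt m * Real.sqrt m = m := Real.mul_self_sqrt hm0'.le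
  have hz2 : δ ^ (-2 : ℤ) = (δ ^ 2)⁻¹ := by
    rw [zpow_neg]; norm_cast
  have hz4 : δ ^ (-4 : ℤ) = (δ ^ 4)⁻¹ := by
    rw [zpow_neg]; norm_cast
  have hδlt1 : δ < 1 := by linarith
  suffices key : x i * M < δ ^ (-2 : ℤ) by
    refine ⟨hsup ▸ key, hsup ▸ lt_of_lt_of_le key ?_⟩
    rw [hz2, hz4]
    have h42 : δ ^ 4 ≤ δ ^ 2 := pow_le_pow_of_le_one hδ0.le hδlt1.le (by norm_num)
    exact inv_anti₀ (by positivity) h42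
  by_contra hcon
  push_neg at hcon
  rw [hz2] at hcon
  have hxi0 : 0 < x i := by
    have h1 : (0:ℝ) < (δ^2)⁻¹ := by positivity
    nlinarith
  have hxiM : 1 ≤ δ ^ 2 * (x i * M) := by
    have h := mul_le_mul_of_nonneg_left hcon (le_of_lt (by positivity : (0:ℝ) < δ ^ 2))
    rwa [mul_inv_cancel₀ (by positivity : (δ:ℝ)^2 ≠ 0)] at h
  set s : ℝ := Real.sqrt δ with hsdef
  have hs0 : 0 < s := Real.sqrt_pos.mpr hδ0
  have hss : s * s = δ := Real.mul_self_sqrt hδ0.le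
  set t : ℝ := 1 / (s * M) with htdef
  have ht0 : 0 < t := by positivity
  have htle : t ≤ δ * s * x i := by
    rw [htdef, div_le_iff₀ (by positivity)]
    calc (1:ℝ) ≤ δ ^ 2 * (x i * M) := hxiM
      _ = δ * s * x i * (s * M) := by rw [← hss]; ring
  set L : Finset (Fin n) := Finset.univ.filter (fun u => t < x u) with hLdef
  have hLcard : (L.card : ℝ) ≤ δ * Real.sqrt m := by
    have h1 : (L.card : ℝ) * t ^ 2 ≤ 1 := by
      have h2 : ∑ u ∈ L, t ^ 2 ≤ ∑ u ∈ L, x u ^ 2 := by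
        refine Finset.sum_le_sum fun u hu => ?_
        have hu' := (Finset.mem_filter.mp hu).2
        nlinarith
      have h3 : ∑ u ∈ L, x u ^ 2 ≤ 1 := by
        rw [← hx1]
        exact Finset.sum_le_sum_of_subset_of_nonneg (Finset.subset_univ L)
          (fun v _ _ => by positivity)
      calc (L.card : ℝ) * t ^ 2 = ∑ u ∈ L, t ^ 2 := by
            rw [Finset.sum_const, nsmul_eq_mul]
        _ ≤ 1 := le_trans h2 h3
    have ht2 : t ^ 2 * (δ * Real.sqrt m) = 1 := by
      rw [htdef]
      rw [div_pow, one_pow, ← hss, ← hM2]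
      field_simp
    have hpos : (0:ℝ) < δ * Real.sqrt m := by positivity
    have := mul_le_mul_of_nonneg_right h1 hpos.le
    rw [one_mul, mul_assoc, ht2, mul_one] at this
    exact this
  have hnotL : ∀ u, u ∉ L → x u ≤ δ * s * x i := by
    intro u hu
    have h : ¬ t < x u := fun h => hu (Finset.mem_filter.mpr ⟨Finset.mem_univ u, h⟩)
    push_neg at h
    exact h.trans htle
  have hLsub : ∀ u, u ∈ L → x u ≤ x i := fun u _ => hi u
  have hmv : ∀ v, ∑ k, A v k * x k = lam * x v := by
    intro v
    have h := congrFun heig v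
    simpa [Matrix.mulVec, dotProduct, hA, hlam] using h
  have hA01 : ∀ j k, A j k = if G.Adj j k then 1 else 0 := fun _ _ => rfl
  have hAnn : ∀ j k, 0 ≤ A j k := by
    intro j k; rw [hA01]; split <;> norm_num
  have hAle1 : ∀ j k, A j k ≤ 1 := by
    intro j k; rw [hA01]; split <;> norm_num
  have hkey : lam ^ 2 * x i = ∑ j, A i j * ∑ k, A j k * x k := by
    simp_rw [hmv]
    calc lam ^ 2 * x i = lam * (lam * x i) := by ring
      _ = lam * ∑ j, A i j * x j := by rw [hmv i]
      _ = ∑ j, lam * (A i j * x j) := Finset.mul_sum _ _ _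
      _ = ∑ j, A i j * (lam * x j) := by
          apply Finset.sum_congr rfl; intros; ring
  have hw0 : ∀ j, 0 ≤ ∑ k, A j k * x k := fun j =>
    Finset.sum_nonneg fun k _ => mul_nonneg (hAnn j k) (hx0 k)
  have hstep1 : lam ^ 2 * x i ≤ ∑ j, ∑ k, A j k * x k := by
    rw [hkey]
    refine Finset.sum_le_sum fun j _ => ?_
    nlinarith [hw0 j, hAle1 i j, hAnn i j]
  set D : Finset (Fin n × Fin n) := Finset.univ.filter (fun p => G.Adj p.1 p.2) with hDdef
  have hC : ∑ j, ∑ k, A j k * x k = ∑ p ∈ D, x p.2 := by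
    rw [hDdef, Finset.sum_filter, ← Finset.univ_product_univ, Finset.sum_product]
    refine Finset.sum_congr rfl fun j _ => Finset.sum_congr rfl fun k _ => ?_
    rw [hA01]; split <;> simp
  have hswap : ∑ p ∈ D, x p.2 = ∑ p ∈ D, x p.1 := by
    refine Finset.sum_nbij' (fun p => Prod.swap p) (fun p => Prod.swap p) ?_ ?_ ?_ ?_ ?_
    · intro p hp
      simp only [hDdef, Finset.mem_filter, Finset.mem_univ, true_and, Prod.fst_swap,
        Prod.snd_swap] at hp ⊢
      exact hp.symm
    · intro p hp
      simp only [hDdef, Finset.mem_filter, Finset.mem_univ, true_and, Prod.fst_swap,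
        Prod.snd_swap] at hp ⊢
      exact hp.symm
    · intro p _; simp
    · intro p _; simp
    · intro p _; simp
  have hDcard : (D.card : ℝ) = 2 * m := by
    have h1 : D.card = ∑ j, G.degree j := by
      rw [hDdef, Finset.card_filter, ← Finset.univ_product_univ, Finset.sum_product]
      refine Finset.sum_congr rfl fun j _ => ?_
      have hdeg : G.degree j = (Finset.univ.filter (G.Adj j)).card := by
        rw [← SimpleGraph.neighborFinset_eq_filter]; rfl
      rw [hdeg, Finset.card_filter]
    have h2 : ∑ j, G.degree j = 2 * G.edgeFinset.card :=
      G.sum_degrees_eq_twice_card_edges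
    have h3 : G.edgeFinset.card = m := by
      rw [hm]
      simp [SimpleGraph.edgeFinset, Set.toFinset_card, Nat.card_eq_fintype_card]
    rw [h1, h2, h3]
    push_cast
    ring
  -- split the edge sum
  set P : Fin n × Fin n → Prop := fun p => p.1 ∈ L ∧ p.2 ∈ L with hPdef
  have hsplit : ∑ p ∈ D, (x p.1 + x p.2)
      = ∑ p ∈ D.filter P, (x p.1 + x p.2) + ∑ p ∈ D.filter (fun p => ¬ P p), (x p.1 + x p.2) :=
    (Finset.sum_filter_add_sum_filter_not D P _).symm
  have hB1 : ∑ p ∈ D.filter P, (x p.1 + x p.2) ≤ ((L.card : ℝ) * L.card) * (2 * x i) := by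
    have hsub : D.filter P ⊆ L ×ˢ L := by
      intro p hp
      have := (Finset.mem_filter.mp hp).2
      exact Finset.mem_product.mpr this
    have hcard : ((D.filter P).card : ℝ) ≤ (L.card : ℝ) * L.card := by
      have := Finset.card_le_card hsub
      rw [Finset.card_product] at this
      exact_mod_cast this
    calc ∑ p ∈ D.filter P, (x p.1 + x p.2)
        ≤ ∑ p ∈ D.filter P, (2 * x i) := by
          refine Finset.sum_le_sum fun p _ => ?_
          have := hi p.1; have := hi p.2; linarith
      _ = ((D.filter P).card : ℝ) * (2 * x i) := by
          rw [Finset.sum_const, nsmul_eq_mul]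
      _ ≤ ((L.card : ℝ) * L.card) * (2 * x i) := by
          apply mul_le_mul_of_nonneg_right hcard; positivity
  have hB2 : ∑ p ∈ D.filter (fun p => ¬ P p), (x p.1 + x p.2)
      ≤ (2 * m) * ((1 + δ * s) * x i) := by
    have hterm : ∀ p ∈ D.filter (fun p => ¬ P p), x p.1 + x p.2 ≤ (1 + δ * s) * x i := by
      intro p hp
      have hnp : ¬ (p.1 ∈ L ∧ p.2 ∈ L) := (Finset.mem_filter.mp hp).2
      have hr : (1 + δ * s) * x i = x i + δ * s * x i := by ring
      by_cases h1 : p.1 ∈ L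
      · have h2 := hnotL p.2 (fun hl => hnp ⟨h1, hl⟩)
        have h4 := hi p.1
        linarith
      · have h2 := hnotL p.1 h1
        have h4 := hi p.2
        linarith
    calc ∑ p ∈ D.filter (fun p => ¬ P p), (x p.1 + x p.2)
        ≤ ∑ p ∈ D.filter (fun p => ¬ P p), ((1 + δ * s) * x i) :=
          Finset.sum_le_sum hterm
      _ = (((D.filter (fun p => ¬ P p)).card : ℝ)) * ((1 + δ * s) * x i) := by
          rw [Finset.sum_const, nsmul_eq_mul]
      _ ≤ ((D.card : ℝ)) * ((1 + δ * s) * x i) := by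
          apply mul_le_mul_of_nonneg_right
          · exact_mod_cast Finset.card_le_card (Finset.filter_subset _ _)
          · positivity
      _ = (2 * m) * ((1 + δ * s) * x i) := by rw [hDcard]
  have hL2 : (L.card : ℝ) * L.card ≤ δ ^ 2 * m := by
    have h0 : (0:ℝ) ≤ (L.card : ℝ) := Nat.cast_nonneg _
    nlinarith [hLcard, Real.sqrt_nonneg (m:ℝ), hsqm]
  have hT : lam ^ 2 * x i ≤ δ ^ 2 * m * x i + m * ((1 + δ * s) * x i) := by
    have e1 : 2 * ∑ p ∈ D, x p.2 = ∑ p ∈ D, (x p.1 + x p.2) := by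
      rw [Finset.sum_add_distrib, ← hswap]; ring
    have e2 : lam ^ 2 * x i ≤ ∑ p ∈ D, x p.2 := by
      rw [← hC]; exact hstep1
    have e3 : ∑ p ∈ D, (x p.1 + x p.2)
        ≤ (δ ^ 2 * m) * (2 * x i) + (2 * m) * ((1 + δ * s) * x i) := by
      rw [hsplit]
      have := mul_le_mul_of_nonneg_right hL2 (by positivity : (0:ℝ) ≤ 2 * x i)
      linarith [hB1, hB2]
    have r1 : (δ ^ 2 * (m:ℝ)) * (2 * x i) = 2 * (δ ^ 2 * (m:ℝ) * x i) := by ring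
    have r2 : (2 * (m:ℝ)) * ((1 + δ * s) * x i) = 2 * ((m:ℝ) * ((1 + δ * s) * x i)) := by ring
    linarith [e1, e2, e3, r1, r2]
  have hgap' : (1 + δ) * m * x i ≤ lam ^ 2 * x i :=
    mul_le_mul_of_nonneg_right hgap hxi0.le
  have hmx : (0:ℝ) < m * x i := mul_pos hm0' hxi0
  have h10 : (1 + δ) * ((m:ℝ) * x i) ≤ (δ ^ 2 + 1 + δ * s) * ((m:ℝ) * x i) := by
    have a1 : (1 + δ) * (m:ℝ) * x i = (1 + δ) * ((m:ℝ) * x i) := by ring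
    have a2 : δ ^ 2 * (m:ℝ) * x i + (m:ℝ) * ((1 + δ * s) * x i)
        = (δ ^ 2 + 1 + δ * s) * ((m:ℝ) * x i) := by ring
    linarith [hgap', hT]
  have h11 : (1 + δ) ≤ δ ^ 2 + 1 + δ * s := le_of_mul_le_mul_right h10 hmx
  have hslt : s < 2 / 3 := by
    rw [hsdef]
    rw [show (2:ℝ)/3 = Real.sqrt ((2/3)^2) by rw [Real.sqrt_sq]; norm_num]
    apply Real.sqrt_lt_sqrt hδ0.le
    nlinarith
  have hds : δ + s < 1 := by linarith
  have hp2 : 0 < δ * (1 - (δ + s)) := mul_pos hδ0 (by linarith)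
  have hr2 : δ * (1 - (δ + s)) = δ - δ ^ 2 - δ * s := by ring
  linarith
end

section
/- Let M ∈ {0,1}^{A×D} with e = ‖M‖_F² > 0 and ρ = ‖M‖, and let v be a unit nonnegative top right singular vector of M. Fix θ > 0 and let R = {a ∈ A : m_a ≠ 0 and ⟨m_a/‖m_a‖₂, v⟩² ≥ 1−θ}. Then the total number of ones in the rows outside R is at most (e − ρ²)/θ. -/
open scoped Classical BigOperators

lemma pNorm_two_eq_sqrt_s18 {α : Type*} [Fintype α] (x : α → ℝ) :
    pNorm 2 x = Real.sqrt (∑ i, x i ^ 2) := by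
  unfold pNorm
  rw [Real.sqrt_eq_rpow]
  congr 1
  refine Finset.sum_congr rfl fun i _ => ?_
  rw [show ((2:ℝ)) = ((2:ℕ):ℝ) by norm_num, Real.rpow_natCast, sq_abs]

lemma pNorm_two_sq {α : Type*} [Fintype α] (x : α → ℝ) :
    (pNorm 2 x) ^ 2 = ∑ i, x i ^ 2 := by
  rw [pNorm_two_eq_sqrt_s18, Real.sq_sqrt (Finset.sum_nonneg fun i _ => sq_nonneg _)]

/-- Aligned rows capture almost all ones: for a 0/1 matrix M with e = ‖M‖_F² > 0,
ρ = ‖M‖, unit nonnegative top right singular vector v, and θ > 0, the total number of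
ones in rows outside the aligned set R = {a : m_a ≠ 0 ∧ ⟨m_a/‖m_a‖, v⟩² ≥ 1−θ}
is at most (e − ρ²)/θ. -/
theorem stmt18 (a d : ℕ) (M : Matrix (Fin a) (Fin d) ℝ)
    (h01 : ∀ i j, M i j = 0 ∨ M i j = 1)
    (he : 0 < ∑ i, ∑ j, M i j ^ 2)
    (v : Fin d → ℝ) (hv0 : ∀ j, 0 ≤ v j) (hv1 : ∑ j, v j ^ 2 = 1)
    (htop : pNorm 2 (M.mulVec v) = opNorm 2 2 M)
    (θ : ℝ) (hθ : 0 < θ) :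
    ∑ i ∈ Finset.univ.filter
        (fun i : Fin a =>
          ¬ (M i ≠ 0 ∧ 1 - θ ≤ (∑ j, (M i j / pNorm 2 (M i)) * v j) ^ 2)),
      ∑ j, M i j
      ≤ ((∑ i, ∑ j, M i j ^ 2) - opNorm 2 2 M ^ 2) / θ := by
  set n : Fin a → ℝ := fun i => ∑ j, M i j ^ 2 with hn
  set c : Fin a → ℝ := fun i => ∑ j, M i j * v j with hc
  have hsq : ∀ i j, M i j ^ 2 = M i j := by
    intro i j; rcases h01 i j with h | h <;> simp [h]
  have hnsum : ∀ i, (∑ j, M i j) = n i := by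
    intro i; simp only [hn]; exact (Finset.sum_congr rfl fun j _ => (hsq i j).symm)
  -- Cauchy–Schwarz per row
  have hCS : ∀ i, c i ^ 2 ≤ n i := by
    intro i
    have := Finset.sum_mul_sq_le_sq_mul_sq Finset.univ (fun j => M i j) v
    simpa [hv1, hn, hc] using this
  have hnnonneg : ∀ i, 0 ≤ n i := fun i => Finset.sum_nonneg fun j _ => sq_nonneg _
  -- ρ² = ∑ c i ²
  have hrho : opNorm 2 2 M ^ 2 = ∑ i, c i ^ 2 := by
    rw [← htop, pNorm_two_sq]
    refine Finset.sum_congr rfl fun i _ => ?_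
    simp [Matrix.mulVec, dotProduct, hc]
  set S := Finset.univ.filter
      (fun i : Fin a =>
        ¬ (M i ≠ 0 ∧ 1 - θ ≤ (∑ j, (M i j / pNorm 2 (M i)) * v j) ^ 2)) with hS
  -- per-row bound on S
  have hrow : ∀ i ∈ S, θ * n i ≤ n i - c i ^ 2 := by
    intro i hi
    rw [hS, Finset.mem_filter] at hi
    by_cases hM : M i = 0
    · have hn0 : n i = 0 := by simp [hn, funext_iff.mp hM]
      have hc0 : c i = 0 := by simp [hc, funext_iff.mp hM]
      simp [hn0, hc0]
    · have hcond : (∑ j, (M i j / pNorm 2 (M i)) * v j) ^ 2 < 1 - θ := by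
        rcases not_and_or.mp hi.2 with h | h
        · exact absurd hM (by simpa using h)
        · exact lt_of_not_ge h
      have hnpos : 0 < n i := by
        rcases lt_or_eq_of_le (hnnonneg i) with h | h
        · exact h
        · exfalso; apply hM
          funext j
          have := (Finset.sum_eq_zero_iff_of_nonneg (fun j _ => sq_nonneg (M i j))).mp h.symm j (Finset.mem_univ j)
          exact pow_eq_zero_iff (n := 2) (by norm_num) |>.mp this
      have hnorm : pNorm 2 (M i) = Real.sqrt (n i) := pNorm_two_eq_sqrt_s18 _
      have hns : Real.sqrt (n i) > 0 := Real.sqrt_pos.mpr hnpos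
      have hrewrite : (∑ j, (M i j / pNorm 2 (M i)) * v j) = c i / Real.sqrt (n i) := by
        rw [hnorm, hc, Finset.sum_div]
        exact Finset.sum_congr rfl fun j _ => by ring
      rw [hrewrite, div_pow, Real.sq_sqrt (hnnonneg i)] at hcond
      have : c i ^ 2 < (1 - θ) * n i := by
        rw [div_lt_iff₀ hnpos] at hcond; linarith
      nlinarith
  -- sum it up
  have hsumS : θ * ∑ i ∈ S, n i ≤ ∑ i ∈ S, (n i - c i ^ 2) := by
    rw [Finset.mul_sum]; exact Finset.sum_le_sum hrow
  have hsumall : ∑ i ∈ S, (n i - c i ^ 2) ≤ ∑ i, (n i - c i ^ 2) := by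
    apply Finset.sum_le_sum_of_subset_of_nonneg (Finset.filter_subset _ _)
    intro i _ _; linarith [hCS i]
  have hkey : θ * ∑ i ∈ S, n i ≤ (∑ i, ∑ j, M i j ^ 2) - opNorm 2 2 M ^ 2 := by
    rw [hrho, ← Finset.sum_sub_distrib]
    exact le_trans hsumS hsumall
  have hgoal : (∑ i ∈ S, ∑ j, M i j) = ∑ i ∈ S, n i :=
    Finset.sum_congr rfl fun i _ => hnsum i
  rw [hgoal, le_div_iff₀ hθ]
  linarith
end
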